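/- arXiv:2207.02967 — 5 statements merged into one kernel-verified Lean document; each statement's English description precedes it below -/
import Mathlib

section
/- If U is an orthogonal p×p matrix and M is a p×q real matrix, then for every k ≤ min(p,q), the maximal absolute value of a k×k subdeterminant of UM is bounded above and below by constant multiples (depending only on p, q, k) of the maximal absolute value of a k×k subdeterminant of M. -/
/-!
Cauchy–Binet type expansion: every `k × k` minor of `V * M` is a sum, over the `p ^ k` maps
`φ : Fin k → Fin p`, of a product of `k` entries of `V` times a `k × k` minor of `M`. Orthogonal
matrices have entries of absolute value at most `1`, so `D_k(U M) ≤ p ^ k D_k(M)`; applying this to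
`Uᵀ` and `U M` gives the reverse bound `D_k(M) ≤ p ^ k D_k(U M)`.
-/

open scoped BigOperators
open Matrix

/-- The maximal absolute value of a `k × k` subdeterminant of a real `p × q` matrix. -/
noncomputable def maxSubdet {p q : ℕ} (k : ℕ) (M : Matrix (Fin p) (Fin q) ℝ) : ℝ :=
  ⨆ (f : Fin k → Fin p) (g : Fin k → Fin q) (_ : Function.Injective f)
    (_ : Function.Injective g), |(M.submatrix f g).det|

theorem Matrix.det_mul_eq_sum_prod_mul_det_submatrix {R m n : Type*} [CommRing R]
    [Fintype m] [DecidableEq m] [Fintype n] [DecidableEq n]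
    (A : Matrix m n R) (B : Matrix n m R) :
    (A * B).det = ∑ φ : m → n, (∏ i, A i (φ i)) * (B.submatrix φ id).det := by
  have hrows : A * B = fun i => ∑ l, A i l • B l := by
    ext i j
    simp [Matrix.mul_apply]
  change detRowAlternating.toMultilinearMap (A * B) = _
  rw [hrows, MultilinearMap.map_sum]
  refine Finset.sum_congr rfl fun φ _ => ?_
  exact (detRowAlternating.toMultilinearMap.map_smul_univ (fun i => A i (φ i))
    (fun i => B (φ i))).trans (smul_eq_mul _ _)

namespace maxSubdet

variable {p q k : ℕ}

theorem nonneg (M : Matrix (Fin p) (Fin q) ℝ) : 0 ≤ maxSubdet k M :=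
  Real.iSup_nonneg fun _ => Real.iSup_nonneg fun _ => Real.iSup_nonneg fun _ =>
    Real.iSup_nonneg fun _ => abs_nonneg _

theorem abs_det_submatrix_le (M : Matrix (Fin p) (Fin q) ℝ) (f : Fin k → Fin p)
    (g : Fin k → Fin q) : |(M.submatrix f g).det| ≤ maxSubdet k M := by
  by_cases hf : Function.Injective f
  · by_cases hg : Function.Injective g
    · exact le_ciSup_of_le (Set.finite_range _).bddAbove f <|
        le_ciSup_of_le (Set.finite_range _).bddAbove g <|
        le_ciSup_of_le (Set.finite_range _).bddAbove hf <|
        le_ciSup_of_le (Set.finite_range _).bddAbove hg le_rfl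
    · obtain ⟨i, j, hij, hne⟩ := Function.not_injective_iff.mp hg
      rw [det_zero_of_column_eq hne fun l => by simp [hij], abs_zero]
      exact nonneg M
  · obtain ⟨i, j, hij, hne⟩ := Function.not_injective_iff.mp hf
    rw [det_zero_of_row_eq hne (by ext l; simp [hij]), abs_zero]
    exact nonneg M

theorem le_of_forall_abs_det_submatrix_le (M : Matrix (Fin p) (Fin q) ℝ) {B : ℝ} (hB : 0 ≤ B)
    (h : ∀ (f : Fin k → Fin p) (g : Fin k → Fin q), |(M.submatrix f g).det| ≤ B) :
    maxSubdet k M ≤ B :=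
  Real.iSup_le (fun f => Real.iSup_le (fun g => Real.iSup_le (fun _ =>
    Real.iSup_le (fun _ => h f g) hB) hB) hB) hB

theorem mul_le_of_abs_apply_le {r : ℕ} {a : ℝ} (ha : 0 ≤ a) (V : Matrix (Fin r) (Fin p) ℝ)
    (hV : ∀ i j, |V i j| ≤ a) (M : Matrix (Fin p) (Fin q) ℝ) :
    maxSubdet k (V * M) ≤ (p : ℝ) ^ k * a ^ k * maxSubdet k M := by
  refine le_of_forall_abs_det_submatrix_le _ (by have := nonneg (k := k) M; positivity)
    fun f g => ?_
  rw [submatrix_mul V M f id g Function.bijective_id, det_mul_eq_sum_prod_mul_det_submatrix]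
  have hterm (φ : Fin k → Fin p) :
      |(∏ i, V (f i) (φ i)) * (M.submatrix φ g).det| ≤ a ^ k * maxSubdet k M := by
    have hprod : |∏ i, V (f i) (φ i)| ≤ a ^ k := by
      rw [Finset.abs_prod]
      simpa using Finset.prod_le_prod (s := Finset.univ) (fun i _ => abs_nonneg _)
        fun i _ => hV (f i) (φ i)
    rw [abs_mul]
    exact mul_le_mul hprod (abs_det_submatrix_le M φ g) (abs_nonneg _) (by positivity)
  calc _ ≤ ∑ φ : Fin k → Fin p, |(∏ i, V (f i) (φ i)) * (M.submatrix φ g).det| :=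
        Finset.abs_sum_le_sum_abs _ _
    _ ≤ ∑ _φ : Fin k → Fin p, a ^ k * maxSubdet k M := Finset.sum_le_sum fun φ _ => hterm φ
    _ = (p : ℝ) ^ k * a ^ k * maxSubdet k M := by simp [mul_assoc]

end maxSubdet

theorem Matrix.abs_apply_le_one_of_transpose_mul_self_eq_one {n : Type*} [Fintype n]
    [DecidableEq n] {U : Matrix n n ℝ} (hU : Uᵀ * U = 1) (i j : n) : |U i j| ≤ 1 :=
  entry_norm_bound_of_unitary (mem_unitaryGroup_iff'.mpr hU) i j

theorem stmt0_general (p q k : ℕ) :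
    ∃ c C : ℝ, 0 < c ∧ 0 < C ∧
      ∀ (U : Matrix (Fin p) (Fin p) ℝ) (M : Matrix (Fin p) (Fin q) ℝ),
        Uᵀ * U = 1 →
          c * maxSubdet k M ≤ maxSubdet k (U * M) ∧
            maxSubdet k (U * M) ≤ C * maxSubdet k M := by
  -- `p ^ k` alone vanishes when `p = 0 < k`.
  have hC : (0 : ℝ) < (p : ℝ) ^ k + 1 := by positivity
  have orthogonal_mul_le {U : Matrix (Fin p) (Fin p) ℝ} (hU : Uᵀ * U = 1) {r : ℕ}
      (N : Matrix (Fin p) (Fin r) ℝ) :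
      maxSubdet k (U * N) ≤ ((p : ℝ) ^ k + 1) * maxSubdet k N := by
    calc _ ≤ (p : ℝ) ^ k * 1 ^ k * maxSubdet k N :=
          maxSubdet.mul_le_of_abs_apply_le zero_le_one U
            (abs_apply_le_one_of_transpose_mul_self_eq_one hU) N
      _ ≤ _ := by
          rw [one_pow, mul_one]
          exact mul_le_mul_of_nonneg_right (by linarith) (maxSubdet.nonneg N)
  refine ⟨((p : ℝ) ^ k + 1)⁻¹, (p : ℝ) ^ k + 1, inv_pos.mpr hC, hC, fun U M hU => ⟨?_, ?_⟩⟩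
  · have hUt : Uᵀᵀ * Uᵀ = 1 := by rw [transpose_transpose, mul_eq_one_comm, hU]
    rw [inv_mul_le_iff₀ hC]
    simpa [← Matrix.mul_assoc, hU] using orthogonal_mul_le hUt (U * M)
  · exact orthogonal_mul_le hU M

/-- For `U` orthogonal, `D_k(UM)` is comparable to `D_k(M)`, with constants
depending only on `p`, `q`, `k`. -/
theorem stmt0 (p q k : ℕ) (hk : k ≤ min p q) :
    ∃ c C : ℝ, 0 < c ∧ 0 < C ∧
      ∀ (U : Matrix (Fin p) (Fin p) ℝ) (M : Matrix (Fin p) (Fin q) ℝ),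
        Uᵀ * U = 1 →
          c * maxSubdet k M ≤ maxSubdet k (U * M) ∧
            maxSubdet k (U * M) ≤ C * maxSubdet k M :=
  stmt0_general p q k
end

section
/- Given a real p×q matrix M, there exists a permutation of its columns such that for every k ≤ ℓ ≤ min(p,q), the maximal absolute value of a k×k subdeterminant using only the first ℓ columns of the permuted matrix is comparable (with constants depending only on p,q) to the maximal absolute value of a k×k subdeterminant of the whole matrix M. -/
open Matrix

/-- `D_k^{(ℓ)}(M)`: the maximal absolute value of a `k × k` subdeterminant of `M` using only
columns with index `< ℓ`. -/
noncomputable def maxSubdetRestr {p q : ℕ} (k ℓ : ℕ) (M : Matrix (Fin p) (Fin q) ℝ) : ℝ :=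
  ⨆ (f : Fin k → Fin p) (g : Fin k → Fin q) (_ : Function.Injective f)
    (_ : Function.Injective g) (_ : ∀ j, (g j : ℕ) < ℓ), |(M.submatrix f g).det|

namespace Stmt3Aux

lemma le_ciSup_of_bound {ι : Sort*} (f : ι → ℝ) (N : ℝ) (h : ∀ i, f i ≤ N) (i : ι) :
    f i ≤ ⨆ j, f j :=
  le_ciSup ⟨N, by rintro x ⟨i, rfl⟩; exact h i⟩ i

variable {p q : ℕ}

noncomputable def detBound (k : ℕ) (M : Matrix (Fin p) (Fin q) ℝ) : ℝ :=
  ∑ f : Fin k → Fin p, ∑ g : Fin k → Fin q, |(M.submatrix f g).det|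

lemma abs_det_le_detBound (k : ℕ) (M : Matrix (Fin p) (Fin q) ℝ) (f : Fin k → Fin p)
    (g : Fin k → Fin q) : |(M.submatrix f g).det| ≤ detBound k M := by
  have h1 : ∑ g' : Fin k → Fin q, |(M.submatrix f g').det| ≤ detBound k M :=
    Finset.single_le_sum (f := fun f' => ∑ g' : Fin k → Fin q, |(M.submatrix f' g').det|)
      (fun i _ => Finset.sum_nonneg (fun j _ => abs_nonneg _)) (Finset.mem_univ f)
  refine le_trans ?_ h1
  exact Finset.single_le_sum (f := fun g' => |(M.submatrix f g').det|)
    (fun i _ => abs_nonneg _) (Finset.mem_univ g)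

lemma detBound_nonneg (k : ℕ) (M : Matrix (Fin p) (Fin q) ℝ) : 0 ≤ detBound k M := by
  unfold detBound; positivity

lemma le_maxSubdet (k : ℕ) (M : Matrix (Fin p) (Fin q) ℝ) {f : Fin k → Fin p}
    {g : Fin k → Fin q} (hf : Function.Injective f) (hg : Function.Injective g) :
    |(M.submatrix f g).det| ≤ maxSubdet k M := by
  set N := detBound k M with hNdef
  have hN : 0 ≤ N := detBound_nonneg k M
  have hb : ∀ (f' : Fin k → Fin p) (g' : Fin k → Fin q), |(M.submatrix f' g').det| ≤ N :=
    fun f' g' => abs_det_le_detBound k M f' g'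
  have s1 : |(M.submatrix f g).det|
      ≤ ⨆ (_ : Function.Injective g), |(M.submatrix f g).det| :=
    le_ciSup_of_bound (fun _ : Function.Injective g => |(M.submatrix f g).det|) N
      (fun _ => hb f g) hg
  have s2 : (⨆ (_ : Function.Injective g), |(M.submatrix f g).det|)
      ≤ ⨆ (_ : Function.Injective f) (_ : Function.Injective g), |(M.submatrix f g).det| :=
    le_ciSup_of_bound
      (fun _ : Function.Injective f =>
        ⨆ (_ : Function.Injective g), |(M.submatrix f g).det|) N
      (fun _ => Real.iSup_le (fun _ => hb f g) hN) hf
  have s3 : (⨆ (_ : Function.Injective f) (_ : Function.Injective g), |(M.submatrix f g).det|)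
      ≤ ⨆ (g' : Fin k → Fin q) (_ : Function.Injective f) (_ : Function.Injective g'),
          |(M.submatrix f g').det| :=
    le_ciSup_of_bound
      (fun g' : Fin k → Fin q =>
        ⨆ (_ : Function.Injective f) (_ : Function.Injective g'), |(M.submatrix f g').det|) N
      (fun g' => Real.iSup_le (fun _ => Real.iSup_le (fun _ => hb f g') hN) hN) g
  have s4 : (⨆ (g' : Fin k → Fin q) (_ : Function.Injective f) (_ : Function.Injective g'),
        |(M.submatrix f g').det|) ≤ maxSubdet k M :=
    le_ciSup_of_bound
      (fun f' : Fin k → Fin p =>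
        ⨆ (g' : Fin k → Fin q) (_ : Function.Injective f') (_ : Function.Injective g'),
          |(M.submatrix f' g').det|) N
      (fun f' => Real.iSup_le (fun g' => Real.iSup_le (fun _ => Real.iSup_le
        (fun _ => hb f' g') hN) hN) hN) f
  exact le_trans s1 (le_trans s2 (le_trans s3 s4))

lemma maxSubdet_le (k : ℕ) (M : Matrix (Fin p) (Fin q) ℝ) {c : ℝ} (hc : 0 ≤ c)
    (h : ∀ (f : Fin k → Fin p) (g : Fin k → Fin q), Function.Injective f →
      Function.Injective g → |(M.submatrix f g).det| ≤ c) : maxSubdet k M ≤ c :=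
  Real.iSup_le (fun f => Real.iSup_le (fun g => Real.iSup_le (fun hf => Real.iSup_le
    (fun hg => h f g hf hg) hc) hc) hc) hc

lemma maxSubdet_nonneg (k : ℕ) (M : Matrix (Fin p) (Fin q) ℝ) : 0 ≤ maxSubdet k M := by
  refine Real.iSup_nonneg (fun f => Real.iSup_nonneg (fun g => Real.iSup_nonneg
    (fun hf => Real.iSup_nonneg (fun hg => abs_nonneg _))))

lemma le_maxSubdetRestr (k ℓ : ℕ) (M : Matrix (Fin p) (Fin q) ℝ) {f : Fin k → Fin p}
    {g : Fin k → Fin q} (hf : Function.Injective f) (hg : Function.Injective g)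
    (hg' : ∀ j, (g j : ℕ) < ℓ) :
    |(M.submatrix f g).det| ≤ maxSubdetRestr k ℓ M := by
  set N := detBound k M with hNdef
  have hN : 0 ≤ N := detBound_nonneg k M
  have hb : ∀ (f' : Fin k → Fin p) (g' : Fin k → Fin q), |(M.submatrix f' g').det| ≤ N :=
    fun f' g' => abs_det_le_detBound k M f' g'
  have s0 : |(M.submatrix f g).det|
      ≤ ⨆ (_ : ∀ j, (g j : ℕ) < ℓ), |(M.submatrix f g).det| :=
    le_ciSup_of_bound (fun _ : ∀ j, (g j : ℕ) < ℓ => |(M.submatrix f g).det|) N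
      (fun _ => hb f g) hg'
  have s1 : (⨆ (_ : ∀ j, (g j : ℕ) < ℓ), |(M.submatrix f g).det|)
      ≤ ⨆ (_ : Function.Injective g) (_ : ∀ j, (g j : ℕ) < ℓ), |(M.submatrix f g).det| :=
    le_ciSup_of_bound
      (fun _ : Function.Injective g =>
        ⨆ (_ : ∀ j, (g j : ℕ) < ℓ), |(M.submatrix f g).det|) N
      (fun _ => Real.iSup_le (fun _ => hb f g) hN) hg
  have s2 : (⨆ (_ : Function.Injective g) (_ : ∀ j, (g j : ℕ) < ℓ), |(M.submatrix f g).det|)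
      ≤ ⨆ (_ : Function.Injective f) (_ : Function.Injective g) (_ : ∀ j, (g j : ℕ) < ℓ),
          |(M.submatrix f g).det| :=
    le_ciSup_of_bound
      (fun _ : Function.Injective f =>
        ⨆ (_ : Function.Injective g) (_ : ∀ j, (g j : ℕ) < ℓ), |(M.submatrix f g).det|) N
      (fun _ => Real.iSup_le (fun _ => Real.iSup_le (fun _ => hb f g) hN) hN) hf
  have s3 : (⨆ (_ : Function.Injective f) (_ : Function.Injective g)
        (_ : ∀ j, (g j : ℕ) < ℓ), |(M.submatrix f g).det|)
      ≤ ⨆ (g' : Fin k → Fin q) (_ : Function.Injective f) (_ : Function.Injective g')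
          (_ : ∀ j, (g' j : ℕ) < ℓ), |(M.submatrix f g').det| :=
    le_ciSup_of_bound
      (fun g' : Fin k → Fin q =>
        ⨆ (_ : Function.Injective f) (_ : Function.Injective g')
          (_ : ∀ j, (g' j : ℕ) < ℓ), |(M.submatrix f g').det|) N
      (fun g' => Real.iSup_le (fun _ => Real.iSup_le (fun _ => Real.iSup_le
        (fun _ => hb f g') hN) hN) hN) g
  have s4 : (⨆ (g' : Fin k → Fin q) (_ : Function.Injective f) (_ : Function.Injective g')
        (_ : ∀ j, (g' j : ℕ) < ℓ), |(M.submatrix f g').det|) ≤ maxSubdetRestr k ℓ M :=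
    le_ciSup_of_bound
      (fun f' : Fin k → Fin p =>
        ⨆ (g' : Fin k → Fin q) (_ : Function.Injective f') (_ : Function.Injective g')
          (_ : ∀ j, (g' j : ℕ) < ℓ), |(M.submatrix f' g').det|) N
      (fun f' => Real.iSup_le (fun g' => Real.iSup_le (fun _ => Real.iSup_le
        (fun _ => Real.iSup_le (fun _ => hb f' g') hN) hN) hN) hN) f
  exact le_trans s0 (le_trans s1 (le_trans s2 (le_trans s3 s4)))

lemma maxSubdetRestr_le (k ℓ : ℕ) (M : Matrix (Fin p) (Fin q) ℝ) {c : ℝ} (hc : 0 ≤ c)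
    (h : ∀ (f : Fin k → Fin p) (g : Fin k → Fin q), Function.Injective f →
      Function.Injective g → (∀ j, (g j : ℕ) < ℓ) → |(M.submatrix f g).det| ≤ c) :
    maxSubdetRestr k ℓ M ≤ c :=
  Real.iSup_le (fun f => Real.iSup_le (fun g => Real.iSup_le (fun hf => Real.iSup_le
    (fun hg => Real.iSup_le (fun hg' => h f g hf hg hg') hc) hc) hc) hc) hc

lemma maxSubdetRestr_nonneg (k ℓ : ℕ) (M : Matrix (Fin p) (Fin q) ℝ) :
    0 ≤ maxSubdetRestr k ℓ M :=
  Real.iSup_nonneg (fun f => Real.iSup_nonneg (fun g => Real.iSup_nonneg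
    (fun _ => Real.iSup_nonneg (fun _ => Real.iSup_nonneg (fun _ => abs_nonneg _)))))

lemma maxSubdetRestr_mono (k : ℕ) {ℓ ℓ' : ℕ} (h : ℓ ≤ ℓ') (M : Matrix (Fin p) (Fin q) ℝ) :
    maxSubdetRestr k ℓ M ≤ maxSubdetRestr k ℓ' M :=
  maxSubdetRestr_le k ℓ M (maxSubdetRestr_nonneg k ℓ' M)
    (fun f g hf hg hg' => le_maxSubdetRestr k ℓ' M hf hg (fun j => lt_of_lt_of_le (hg' j) h))

lemma maxSubdetRestr_le_maxSubdet (k ℓ : ℕ) (M : Matrix (Fin p) (Fin q) ℝ) :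
    maxSubdetRestr k ℓ M ≤ maxSubdet k M :=
  maxSubdetRestr_le k ℓ M (maxSubdet_nonneg k M)
    (fun f g hf hg _ => le_maxSubdet k M hf hg)

lemma maxSubdet_perm (k : ℕ) (M : Matrix (Fin p) (Fin q) ℝ) (e : Equiv.Perm (Fin q)) :
    maxSubdet k (M.submatrix id (e : Fin q → Fin q)) = maxSubdet k M := by
  apply le_antisymm
  · refine maxSubdet_le k _ (maxSubdet_nonneg k M) (fun f g hf hg => ?_)
    have : (M.submatrix id (e : Fin q → Fin q)).submatrix f g = M.submatrix f (e ∘ g) := rfl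
    rw [this]
    exact le_maxSubdet k M hf (e.injective.comp hg)
  · refine maxSubdet_le k _ (maxSubdet_nonneg k _) (fun f g hf hg => ?_)
    have : M.submatrix f g = (M.submatrix id (e : Fin q → Fin q)).submatrix f (e.symm ∘ g) := by
      ext i j; simp
    rw [this]
    exact le_maxSubdet k _ hf (e.symm.injective.comp hg)

lemma maxSubdet_zero (M : Matrix (Fin p) (Fin q) ℝ) : maxSubdet 0 M = 1 := by
  apply le_antisymm
  · exact maxSubdet_le 0 M zero_le_one (fun f g _ _ => by simp [Matrix.det_isEmpty])
  · have h := le_maxSubdet 0 M (f := fun x => x.elim0) (g := fun x => x.elim0)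
      (fun x => x.elim0) (fun x => x.elim0)
    simpa [Matrix.det_isEmpty] using h

lemma maxSubdetRestr_zero (ℓ : ℕ) (M : Matrix (Fin p) (Fin q) ℝ) :
    maxSubdetRestr 0 ℓ M = 1 := by
  apply le_antisymm
  · exact maxSubdetRestr_le 0 ℓ M zero_le_one (fun f g _ _ _ => by simp [Matrix.det_isEmpty])
  · have h := le_maxSubdetRestr 0 ℓ M (f := fun x => x.elim0) (g := fun x => x.elim0)
      (fun x => x.elim0) (fun x => x.elim0) (fun j => j.elim0)
    simpa [Matrix.det_isEmpty] using h

open Submodule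

lemma det_expand {n : ℕ} (S : Finset (Fin n)) :
    ∀ X Y : Matrix (Fin n) (Fin n) ℝ,
    (Matrix.of fun i j => if j ∈ S then X i j + Y i j else X i j).det
      = ∑ A ∈ S.powerset, (Matrix.of fun i j => if j ∈ A then Y i j else X i j).det := by
  classical
  induction S using Finset.induction_on with
  | empty =>
    intro X Y
    simp only [Finset.notMem_empty, if_false, Finset.powerset_empty, Finset.sum_singleton]
  | @insert a S ha ih =>
    intro X Y
    have key : (Matrix.of fun i j => if j ∈ insert a S then X i j + Y i j else X i j)
        = Matrix.updateCol (Matrix.of fun i j => if j ∈ S then X i j + Y i j else X i j) a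
            ((fun i => X i a) + fun i => Y i a) := by
      ext i j
      by_cases hj : j = a
      · subst hj; simp [Matrix.updateCol_apply]
      · simp [Matrix.updateCol_apply, hj, Finset.mem_insert]
    rw [key, Matrix.det_updateCol_add]
    have e1 : Matrix.updateCol
        (Matrix.of fun i j => if j ∈ S then X i j + Y i j else X i j) a (fun i => X i a)
        = Matrix.of fun i j => if j ∈ S then X i j + Y i j else X i j := by
      ext i j
      by_cases hj : j = a
      · subst hj; simp [Matrix.updateCol_apply, ha]
      · simp [Matrix.updateCol_apply, hj]
    set X' := Matrix.updateCol X a (fun i => Y i a) with hX'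
    have e2 : Matrix.updateCol
        (Matrix.of fun i j => if j ∈ S then X i j + Y i j else X i j) a (fun i => Y i a)
        = Matrix.of fun i j => if j ∈ S then X' i j + Y i j else X' i j := by
      ext i j
      by_cases hj : j = a
      · subst hj; simp [Matrix.updateCol_apply, ha, hX']
      · simp [Matrix.updateCol_apply, hj, hX']
    rw [e1, e2, ih X Y, ih X' Y, Finset.powerset_insert]
    have hdisj : Disjoint S.powerset (S.powerset.image (insert a)) := by
      rw [Finset.disjoint_right]
      intro B hB hB'
      obtain ⟨A', hA', rfl⟩ := Finset.mem_image.mp hB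
      have : a ∈ S := (Finset.mem_powerset.mp hB') (Finset.mem_insert_self a A')
      exact ha this
    rw [Finset.sum_union hdisj]
    congr 1
    rw [Finset.sum_image]
    · apply Finset.sum_congr rfl
      intro A hA
      have haA : a ∉ A := fun h => ha ((Finset.mem_powerset.mp hA) h)
      congr 1
      ext i j
      by_cases hj : j = a
      · subst hj
        simp [haA, hX', Matrix.updateCol_apply]
      · by_cases hjA : j ∈ A <;>
          simp [hjA, hj, hX', Matrix.updateCol_apply, Finset.mem_insert]
    · intro A hA B hB hAB
      have haA : a ∉ A := fun h => ha ((Finset.mem_powerset.mp hA) h)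
      have haB : a ∉ B := fun h => ha ((Finset.mem_powerset.mp hB) h)
      have := congrArg (fun s => Finset.erase s a) hAB
      simpa [Finset.erase_insert haA, Finset.erase_insert haB] using this

variable {p q : ℕ}

lemma bcore (M : Matrix (Fin p) (Fin q) ℝ) (δ : ℝ) (hδ : 0 ≤ δ) :
    ∀ (n : ℕ) (A : Matrix (Fin n) (Fin n) ℝ) (f : Fin n → Fin p) (c : Fin n → Option (Fin q)),
    Function.Injective f →
    (∀ i j x, c i = some x → c j = some x → i = j) →
    (∀ i j x, c j = some x → A i j = M (f i) x) →
    (∀ i j, c j = none → |A i j| ≤ δ) →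
    |A.det| ≤ (n : ℝ)^n * δ^((Finset.univ.filter (fun j => c j = none)).card) *
      maxSubdet ((Finset.univ.filter (fun j => (c j).isSome)).card) M := by
  classical
  intro n
  induction n with
  | zero =>
    intro A f c _ _ _ _
    simp [Matrix.det_isEmpty, maxSubdet_zero]
  | succ n ih =>
    intro A f c hf hcinj hAsome hAnone
    by_cases hall : ∀ j, (c j).isSome
    · -- all columns are genuine columns of M
      set g : Fin (n+1) → Fin q := fun j => (c j).get (hall j) with hg
      have hcg : ∀ j, c j = some (g j) := fun j => (Option.some_get (hall j)).symm
      have hginj : Function.Injective g := by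
        intro i j hij
        exact hcinj i j (g i) (hcg i) (by rw [hcg j, hij])
      have hAeq : A = M.submatrix f g := by
        ext i j
        exact hAsome i j (g j) (hcg j)
      have h1 : (Finset.univ.filter (fun j => c j = none)).card = 0 := by
        rw [Finset.card_eq_zero, Finset.filter_eq_empty_iff]
        intro j _
        rw [hcg j]; simp
      have h2 : (Finset.univ.filter (fun j : Fin (n+1) => (c j).isSome)).card = n + 1 := by
        rw [Finset.filter_true_of_mem (fun j _ => hall j), Finset.card_univ, Fintype.card_fin]
      rw [h1, h2, hAeq]
      have hD := le_maxSubdet (n+1) M hf hginj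
      have hone : (1 : ℝ) ≤ ((n:ℝ)+1)^(n+1) := one_le_pow₀ (by linarith [Nat.cast_nonneg (α := ℝ) n])
      calc |(M.submatrix f g).det| ≤ maxSubdet (n+1) M := hD
        _ ≤ ((n+1 : ℕ) : ℝ)^(n+1) * maxSubdet (n+1) M :=
            le_mul_of_one_le_left (maxSubdet_nonneg _ M) (by push_cast; exact hone)
        _ = ((n+1 : ℕ) : ℝ)^(n+1) * δ^0 * maxSubdet (n+1) M := by ring
    · push_neg at hall
      obtain ⟨j₀, hj₀⟩ := hall
      replace hj₀ : c j₀ = none := by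
        cases h : c j₀ with
        | none => rfl
        | some x => simp [h] at hj₀
      -- counts
      have hcardnone : (Finset.univ.filter (fun j => c j = none)).card
          = (Finset.univ.filter (fun j : Fin n => c (j₀.succAbove j) = none)).card + 1 := by
        rw [Finset.card_filter, Finset.card_filter,
          Fin.sum_univ_succAbove (fun j => if c j = none then 1 else 0) j₀]
        simp [hj₀, add_comm]
      have hcardsome : (Finset.univ.filter (fun j => (c j).isSome)).card
          = (Finset.univ.filter (fun j : Fin n => (c (j₀.succAbove j)).isSome)).card := by
        rw [Finset.card_filter, Finset.card_filter,
          Fin.sum_univ_succAbove (fun j => if (c j).isSome then 1 else 0) j₀]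
        simp [hj₀]
      set s := (Finset.univ.filter (fun j : Fin n => (c (j₀.succAbove j)).isSome)).card with hs
      set b := (Finset.univ.filter (fun j : Fin n => c (j₀.succAbove j) = none)).card with hb
      have hminor : ∀ i : Fin (n+1),
          |(A.submatrix i.succAbove j₀.succAbove).det| ≤ (n : ℝ)^n * δ^b * maxSubdet s M := by
        intro i
        refine ih (A.submatrix i.succAbove j₀.succAbove) (f ∘ i.succAbove) (c ∘ j₀.succAbove)
          (hf.comp (Fin.succAbove_right_injective)) ?_ ?_ ?_
        · intro i' j' x h1 h2
          exact Fin.succAbove_right_injective (hcinj _ _ x h1 h2)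
        · intro i' j' x hx
          exact hAsome _ _ x hx
        · intro i' j' hx
          exact hAnone _ _ hx
      rw [Matrix.det_succ_column A j₀]
      have habs : ∀ i : Fin (n+1),
          |(-1 : ℝ)^((i:ℕ) + (j₀:ℕ)) * A i j₀ * (A.submatrix i.succAbove j₀.succAbove).det|
            ≤ δ * ((n : ℝ)^n * δ^b * maxSubdet s M) := by
        intro i
        rw [abs_mul, abs_mul, abs_pow, abs_neg, abs_one, one_pow, one_mul]
        exact mul_le_mul (hAnone i j₀ hj₀) (hminor i) (abs_nonneg _)  hδ
      calc |∑ i : Fin (n+1), (-1 : ℝ)^((i:ℕ) + (j₀:ℕ)) * A i j₀ *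
              (A.submatrix i.succAbove j₀.succAbove).det|
          ≤ ∑ i : Fin (n+1), |(-1 : ℝ)^((i:ℕ) + (j₀:ℕ)) * A i j₀ *
              (A.submatrix i.succAbove j₀.succAbove).det| := Finset.abs_sum_le_sum_abs _ _
        _ ≤ ∑ _i : Fin (n+1), δ * ((n : ℝ)^n * δ^b * maxSubdet s M) :=
            Finset.sum_le_sum (fun i _ => habs i)
        _ = (n+1 : ℝ) * δ * ((n : ℝ)^n * δ^b * maxSubdet s M) := by
            rw [Finset.sum_const, Finset.card_univ, Fintype.card_fin]; push_cast; ring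
        _ ≤ ((n+1 : ℕ) : ℝ)^(n+1) * δ^((Finset.univ.filter (fun j => c j = none)).card) *
              maxSubdet ((Finset.univ.filter (fun j => (c j).isSome)).card) M := by
            rw [hcardnone, hcardsome]
            have h1 : ((n:ℝ))^n ≤ ((n:ℝ)+1)^n :=
              pow_le_pow_left₀ (Nat.cast_nonneg n) (by linarith) n
            have hD := maxSubdet_nonneg s M
            have hfac : ((n:ℝ) + 1) * (n:ℝ)^n ≤ ((n:ℝ)+1)^(n+1) := by
              calc ((n:ℝ) + 1) * (n:ℝ)^n ≤ ((n:ℝ) + 1) * ((n:ℝ)+1)^n :=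
                    mul_le_mul_of_nonneg_left h1 (by linarith [Nat.cast_nonneg (α := ℝ) n])
                _ = ((n:ℝ)+1)^(n+1) := by rw [pow_succ]; ring
            calc ((n:ℝ) + 1) * δ * ((n:ℝ)^n * δ^b * maxSubdet s M)
                = (((n:ℝ)+1) * (n:ℝ)^n) * (δ^(b+1) * maxSubdet s M) := by rw [pow_succ]; ring
              _ ≤ ((n:ℝ)+1)^(n+1) * (δ^(b+1) * maxSubdet s M) :=
                  mul_le_mul_of_nonneg_right hfac (mul_nonneg (pow_nonneg hδ _) hD)
              _ = ((n+1 : ℕ) : ℝ)^(n+1) * δ^(b+1) * maxSubdet s M := by push_cast; ring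


noncomputable def colv (M : Matrix (Fin p) (Fin q) ℝ) (c : Fin q) :
    EuclideanSpace ℝ (Fin p) := WithLp.toLp 2 (fun r => M r c)

lemma colv_apply (M : Matrix (Fin p) (Fin q) ℝ) (c : Fin q) (r : Fin p) :
    colv M c r = M r c := rfl

noncomputable def resid (W : Submodule ℝ (EuclideanSpace ℝ (Fin p)))
    (v : EuclideanSpace ℝ (Fin p)) : ℝ :=
  ‖v - (orthogonalProjection W v : EuclideanSpace ℝ (Fin p))‖

lemma resid_nonneg (W : Submodule ℝ (EuclideanSpace ℝ (Fin p)))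
    (v : EuclideanSpace ℝ (Fin p)) : 0 ≤ resid W v := norm_nonneg _

lemma resid_zero_of_mem {W : Submodule ℝ (EuclideanSpace ℝ (Fin p))}
    {v : EuclideanSpace ℝ (Fin p)} (hv : v ∈ W) : resid W v = 0 := by
  unfold resid
  have : orthogonalProjection W v = ⟨v, hv⟩ := orthogonalProjection_mem_subspace_eq_self ⟨v, hv⟩
  rw [this]
  simp

lemma resid_mono {W W' : Submodule ℝ (EuclideanSpace ℝ (Fin p))} (h : W ≤ W')
    (v : EuclideanSpace ℝ (Fin p)) : resid W' v ≤ resid W v := by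
  unfold resid
  rw [← Submodule.starProjection_apply, Submodule.starProjection_minimal]
  refine ciInf_le_of_le ⟨0, ?_⟩
    (⟨(orthogonalProjection W v : EuclideanSpace ℝ (Fin p)), h (orthogonalProjection W v).2⟩ : W')
    le_rfl
  rintro x ⟨y, rfl⟩
  exact norm_nonneg _

lemma abs_apply_le_norm (x : EuclideanSpace ℝ (Fin p)) (r : Fin p) : |x r| ≤ ‖x‖ := by
  rw [EuclideanSpace.norm_eq]
  have h1 : |x r| = Real.sqrt (‖x r‖^2) := by
    rw [Real.sqrt_sq_eq_abs]; rw [Real.norm_eq_abs, abs_abs]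
  rw [h1]
  apply Real.sqrt_le_sqrt
  exact Finset.single_le_sum (f := fun i => ‖x i‖^2) (fun i _ => sq_nonneg _) (Finset.mem_univ r)

noncomputable def Wlist (M : Matrix (Fin p) (Fin q) ℝ) (l : List (Fin q)) :
    Submodule ℝ (EuclideanSpace ℝ (Fin p)) :=
  Submodule.span ℝ (colv M '' {x | x ∈ l})

noncomputable def gpick (M : Matrix (Fin p) (Fin q) ℝ) (l : List (Fin q))
    (h : (Finset.univ \ l.toFinset).Nonempty) : Fin q :=
  Classical.choose (Finset.exists_max_image (Finset.univ \ l.toFinset)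
    (fun c => resid (Wlist M l) (colv M c)) h)

lemma gpick_not_mem (M : Matrix (Fin p) (Fin q) ℝ) (l : List (Fin q))
    (h : (Finset.univ \ l.toFinset).Nonempty) : gpick M l h ∉ l := by
  have hx := (Classical.choose_spec (Finset.exists_max_image (Finset.univ \ l.toFinset)
    (fun c => resid (Wlist M l) (colv M c)) h)).1
  rw [Finset.mem_sdiff] at hx
  intro hc
  exact hx.2 (List.mem_toFinset.mpr hc)

lemma gpick_max (M : Matrix (Fin p) (Fin q) ℝ) (l : List (Fin q))
    (h : (Finset.univ \ l.toFinset).Nonempty) (c : Fin q) (hc : c ∉ l) :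
    resid (Wlist M l) (colv M c) ≤ resid (Wlist M l) (colv M (gpick M l h)) := by
  have hx := (Classical.choose_spec (Finset.exists_max_image (Finset.univ \ l.toFinset)
    (fun c => resid (Wlist M l) (colv M c)) h)).2
  refine hx c ?_
  rw [Finset.mem_sdiff]
  exact ⟨Finset.mem_univ c, fun hm => hc (List.mem_toFinset.mp hm)⟩

noncomputable def glist (M : Matrix (Fin p) (Fin q) ℝ) : ℕ → List (Fin q)
  | 0 => []
  | j+1 =>
    if h : (Finset.univ \ (glist M j).toFinset).Nonempty then glist M j ++ [gpick M (glist M j) h]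
    else glist M j

lemma glist_prefix_succ (M : Matrix (Fin p) (Fin q) ℝ) (j : ℕ) :
    glist M j <+: glist M (j+1) := by
  rw [glist]
  split
  · exact List.prefix_append _ _
  · exact List.prefix_rfl

lemma glist_prefix (M : Matrix (Fin p) (Fin q) ℝ) {i j : ℕ} (h : i ≤ j) :
    glist M i <+: glist M j := by
  induction j with
  | zero => rw [Nat.le_zero.mp h]
  | succ j ih =>
    rcases Nat.lt_or_ge i (j+1) with h' | h'
    · exact (ih (Nat.lt_succ_iff.mp h')).trans (glist_prefix_succ M j)
    · rw [Nat.le_antisymm h h']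

lemma glist_nodup (M : Matrix (Fin p) (Fin q) ℝ) (j : ℕ) : (glist M j).Nodup := by
  induction j with
  | zero => simp [glist]
  | succ j ih =>
    rw [glist]
    split
    · rename_i h
      simp [List.nodup_append, ih, gpick_not_mem M (glist M j) h]
      exact fun a ha h' => gpick_not_mem M (glist M j) h (h' ▸ ha)
    · exact ih

lemma glist_length (M : Matrix (Fin p) (Fin q) ℝ) (j : ℕ) (hj : j ≤ q) :
    (glist M j).length = j := by
  induction j with
  | zero => simp [glist]
  | succ j ih =>
    have hlen : (glist M j).length = j := ih (Nat.le_of_succ_le hj)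
    have hne : (Finset.univ \ (glist M j).toFinset).Nonempty := by
      rw [← Finset.card_pos, Finset.card_sdiff_of_subset (Finset.subset_univ _)]
      have hcard : (glist M j).toFinset.card ≤ (glist M j).length := List.toFinset_card_le _
      have : (Finset.univ : Finset (Fin q)).card = q := by simp
      omega
    rw [glist, dif_pos hne]
    simp [hlen]

lemma glist_spec (M : Matrix (Fin p) (Fin q) ℝ) (j : ℕ) (hj : j < q) :
    ∃ pk : Fin q, glist M (j+1) = glist M j ++ [pk] ∧ pk ∉ glist M j ∧
      ∀ c : Fin q, c ∉ glist M j →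
        resid (Wlist M (glist M j)) (colv M c) ≤ resid (Wlist M (glist M j)) (colv M pk) := by
  have hlen : (glist M j).length = j := glist_length M j (le_of_lt hj)
  have hne : (Finset.univ \ (glist M j).toFinset).Nonempty := by
    rw [← Finset.card_pos, Finset.card_sdiff_of_subset (Finset.subset_univ _)]
    have hcard : (glist M j).toFinset.card ≤ (glist M j).length := List.toFinset_card_le _
    have : (Finset.univ : Finset (Fin q)).card = q := by simp
    omega
  refine ⟨gpick M (glist M j) hne, ?_, gpick_not_mem M _ hne, gpick_max M _ hne⟩
  rw [glist, dif_pos hne]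

noncomputable def gperm (M : Matrix (Fin p) (Fin q) ℝ) : Equiv.Perm (Fin q) :=
  Equiv.ofBijective (fun i => (glist M q).get (Fin.cast (glist_length M q le_rfl).symm i))
    (Finite.injective_iff_bijective.mp
      ((List.nodup_iff_injective_get.mp (glist_nodup M q)).comp (Fin.cast_injective _)))

lemma gperm_eq_getElem (M : Matrix (Fin p) (Fin q) ℝ) (i : Fin q) {j : ℕ} (hj : j ≤ q)
    (hij : (i : ℕ) < j) :
    gperm M i = (glist M j)[(i:ℕ)]'(by rw [glist_length M j hj]; exact hij) := by
  have h := (glist_prefix M hj).getElem (i := (i:ℕ)) (by rw [glist_length M j hj]; exact hij)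
  have h2 : gperm M i = (glist M q)[(i:ℕ)]'(by rw [glist_length M q le_rfl]; exact i.2) := rfl
  rw [h2, ← h]

lemma gperm_mem_glist (M : Matrix (Fin p) (Fin q) ℝ) (i : Fin q) {j : ℕ} (hj : j ≤ q)
    (hij : (i : ℕ) < j) : gperm M i ∈ glist M j := by
  rw [gperm_eq_getElem M i hj hij]
  exact List.getElem_mem _

lemma mem_glist_iff (M : Matrix (Fin p) (Fin q) ℝ) {j : ℕ} (hj : j ≤ q) (x : Fin q) :
    x ∈ glist M j ↔ ∃ i : Fin q, (i : ℕ) < j ∧ gperm M i = x := by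
  constructor
  · intro hx
    obtain ⟨n, hn, hget⟩ := List.mem_iff_getElem.mp hx
    rw [glist_length M j hj] at hn
    refine ⟨⟨n, lt_of_lt_of_le hn hj⟩, hn, ?_⟩
    rw [gperm_eq_getElem M _ hj hn]
    exact hget
  · rintro ⟨i, hij, rfl⟩
    exact gperm_mem_glist M i hj hij

noncomputable def Wcols (M : Matrix (Fin p) (Fin q) ℝ) (j : ℕ) :
    Submodule ℝ (EuclideanSpace ℝ (Fin p)) := Wlist M (glist M j)

noncomputable def dd (M : Matrix (Fin p) (Fin q) ℝ) (j : ℕ) : ℝ :=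
  if hj : j < q then resid (Wcols M j) (colv M (gperm M ⟨j, hj⟩)) else 0

lemma dd_nonneg (M : Matrix (Fin p) (Fin q) ℝ) (j : ℕ) : 0 ≤ dd M j := by
  unfold dd; split
  · exact resid_nonneg _ _
  · exact le_refl 0

lemma colv_mem_Wcols (M : Matrix (Fin p) (Fin q) ℝ) {j : ℕ} {c : Fin q} (hc : c ∈ glist M j) :
    colv M c ∈ Wcols M j :=
  Submodule.subset_span ⟨c, hc, rfl⟩

lemma resid_le_dd (M : Matrix (Fin p) (Fin q) ℝ) {j : ℕ} (hj : j < q) (c : Fin q) :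
    resid (Wcols M j) (colv M c) ≤ dd M j := by
  obtain ⟨pk, heq, hpk, hmax⟩ := glist_spec M j hj
  have hddval : dd M j = resid (Wcols M j) (colv M pk) := by
    have hlen1 : (glist M (j+1)).length = j + 1 := glist_length M (j+1) (Nat.succ_le_of_lt hj)
    have hlenj : (glist M j).length = j := glist_length M j (le_of_lt hj)
    have hg : gperm M ⟨j, hj⟩ = pk := by
      have hg1 := gperm_eq_getElem (M := M) (i := ⟨j, hj⟩) (j := j + 1)
        (Nat.succ_le_of_lt hj) (Nat.lt_succ_self j)
      rw [hg1, List.getElem_of_eq heq (by simp [hlen1])]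
      exact List.getElem_concat_length hlenj.symm _
    rw [dd, dif_pos hj, hg]
  rw [hddval]
  by_cases hc : c ∈ glist M j
  · rw [resid_zero_of_mem (colv_mem_Wcols M hc)]
    exact resid_nonneg _ _
  · exact hmax c hc

lemma dd_antitone (M : Matrix (Fin p) (Fin q) ℝ) {i j : ℕ} (h : i ≤ j) (hj : j < q) :
    dd M j ≤ dd M i := by
  have hi : i < q := lt_of_le_of_lt h hj
  rw [dd, dif_pos hj]
  have h1 : resid (Wcols M j) (colv M (gperm M ⟨j, hj⟩))
      ≤ resid (Wcols M i) (colv M (gperm M ⟨j, hj⟩)) := by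
    apply resid_mono
    apply Submodule.span_mono
    apply Set.image_mono
    intro x hx
    exact (glist_prefix M h).subset hx
  exact h1.trans (resid_le_dd M hi _)



lemma det_updateRow_finset_sum {m : ℕ} (A : Matrix (Fin m) (Fin m) ℝ) (j : Fin m)
    {β : Type} (s : Finset β) (c : β → ℝ) (u : β → Fin m → ℝ) :
    (A.updateRow j (∑ r ∈ s, c r • u r)).det = ∑ r ∈ s, c r * (A.updateRow j (u r)).det := by
  classical
  induction s using Finset.induction_on with
  | empty =>
    simp only [Finset.sum_empty]
    exact Matrix.det_eq_zero_of_row_eq_zero j (fun l => by simp [Matrix.updateRow_apply])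
  | @insert a s ha ih =>
    rw [Finset.sum_insert ha, Finset.sum_insert ha, Matrix.det_updateRow_add,
      Matrix.det_updateRow_smul, ih]

lemma det_updateColumn_finset_sum {m : ℕ} (A : Matrix (Fin m) (Fin m) ℝ) (j : Fin m)
    {β : Type} (s : Finset β) (c : β → ℝ) (u : β → Fin m → ℝ) :
    (A.updateCol j (∑ r ∈ s, c r • u r)).det = ∑ r ∈ s, c r * (A.updateCol j (u r)).det := by
  classical
  induction s using Finset.induction_on with
  | empty =>
    simp only [Finset.sum_empty]
    exact Matrix.det_eq_zero_of_column_eq_zero j (fun l => by simp [Matrix.updateCol_apply])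
  | @insert a s ha ih =>
    rw [Finset.sum_insert ha, Finset.sum_insert ha, Matrix.det_updateCol_add,
      Matrix.det_updateCol_smul, ih]

lemma surj_onto_lt {j : ℕ} (hj : j ≤ q) (g0 : Fin j → Fin q) (hg0 : Function.Injective g0)
    (hlt : ∀ l, (g0 l : ℕ) < j) (i : Fin q) (hi : (i : ℕ) < j) : ∃ l, g0 l = i := by
  classical
  have h2 : Finset.univ.filter (fun x : Fin q => (x : ℕ) < j)
      = Finset.univ.image (fun l : Fin j => Fin.castLE hj l) := by
    ext x
    simp only [Finset.mem_filter, Finset.mem_univ, true_and, Finset.mem_image]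
    constructor
    · intro hx; exact ⟨⟨(x:ℕ), hx⟩, by ext; simp⟩
    · rintro ⟨l, rfl⟩; exact l.2
  have himg : Finset.univ.image g0 = Finset.univ.filter (fun x : Fin q => (x : ℕ) < j) := by
    apply Finset.eq_of_subset_of_card_le
    · intro x hx
      obtain ⟨l, _, rfl⟩ := Finset.mem_image.mp hx
      simp [hlt l]
    · rw [h2, Finset.card_image_of_injective _ (Fin.castLE_injective hj),
        Finset.card_image_of_injective _ hg0]
  have : i ∈ Finset.univ.image g0 := by
    rw [himg]; simp [hi]
  obtain ⟨l, _, hl⟩ := Finset.mem_image.mp this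
  exact ⟨l, hl⟩

lemma Wcols_eq_span (M : Matrix (Fin p) (Fin q) ℝ) {j : ℕ} (hj : j ≤ q)
    (g0 : Fin j → Fin q) (hg0 : Function.Injective g0) (hlt : ∀ l, (g0 l : ℕ) < j) :
    Wcols M j = Submodule.span ℝ (Set.range (fun l : Fin j => colv M (gperm M (g0 l)))) := by
  unfold Wcols Wlist
  congr 1
  ext x
  constructor
  · rintro ⟨c, hc, rfl⟩
    have hc' : c ∈ glist M j := hc
    rw [mem_glist_iff M hj] at hc'
    replace hc := hc' 
    obtain ⟨i, hij, rfl⟩ := hc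
    obtain ⟨l, rfl⟩ := surj_onto_lt hj g0 hg0 hlt i hij
    exact ⟨l, rfl⟩
  · rintro ⟨l, rfl⟩
    exact ⟨gperm M (g0 l), gperm_mem_glist M _ hj (hlt l), rfl⟩

lemma lemA (M : Matrix (Fin p) (Fin q) ℝ) (j' : ℕ) (hjp : j' + 1 ≤ p) (hjq : j' + 1 ≤ q) :
    dd M j' * maxSubdetRestr j' j' (M.submatrix id ⇑(gperm M)) ≤
      (p : ℝ) * maxSubdetRestr (j'+1) (j'+1) (M.submatrix id ⇑(gperm M)) := by
  classical
  set N := M.submatrix id ⇑(gperm M) with hN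
  have hj'q : j' < q := hjq
  have hj'p : j' ≤ p := Nat.le_of_succ_le hjp
  set G' := maxSubdetRestr j' j' N with hG'
  set G := maxSubdetRestr (j'+1) (j'+1) N with hG
  have hGnn : 0 ≤ G := maxSubdetRestr_nonneg _ _ _
  have hG'nn : 0 ≤ G' := maxSubdetRestr_nonneg _ _ _
  have hddnn : 0 ≤ dd M j' := dd_nonneg M j'
  rcases eq_or_lt_of_le hddnn with hdd0 | hddpos
  · rw [← hdd0, zero_mul]
    positivity
  -- attainment of G'
  obtain ⟨f0, g0, hf0, hg0, hg0lt, hatt⟩ :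
      ∃ (f0 : Fin j' → Fin p) (g0 : Fin j' → Fin q), Function.Injective f0 ∧
        Function.Injective g0 ∧ (∀ i, (g0 i : ℕ) < j') ∧ G' ≤ |(N.submatrix f0 g0).det| := by
    set s := (Finset.univ : Finset ((Fin j' → Fin p) × (Fin j' → Fin q))).filter
      (fun fg => Function.Injective fg.1 ∧ Function.Injective fg.2 ∧ ∀ i, ((fg.2 i : ℕ) < j'))
      with hs
    have hne : s.Nonempty := by
      refine ⟨(fun i => Fin.castLE hj'p i, fun i => Fin.castLE (le_of_lt hj'q) i), ?_⟩
      rw [hs, Finset.mem_filter]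
      exact ⟨Finset.mem_univ _, Fin.castLE_injective hj'p, Fin.castLE_injective (le_of_lt hj'q),
        fun i => i.2⟩
    obtain ⟨fg, hmem, hmax⟩ := Finset.exists_max_image s
      (fun fg => |(N.submatrix fg.1 fg.2).det|) hne
    rw [hs, Finset.mem_filter] at hmem
    refine ⟨fg.1, fg.2, hmem.2.1, hmem.2.2.1, hmem.2.2.2, ?_⟩
    refine maxSubdetRestr_le _ _ _ (abs_nonneg _) (fun f g hf hg hlt => ?_)
    exact hmax (f, g) (by rw [hs, Finset.mem_filter]; exact ⟨Finset.mem_univ _, hf, hg, hlt⟩)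
  set v : EuclideanSpace ℝ (Fin p) := colv M (gperm M ⟨j', hj'q⟩) with hv
  set Pv : EuclideanSpace ℝ (Fin p) := (orthogonalProjection (Wcols M j') v :
    EuclideanSpace ℝ (Fin p)) with hPv
  set w : EuclideanSpace ℝ (Fin p) := v - Pv with hw
  have hw_orth : w ∈ (Wcols M j')ᗮ := Submodule.sub_starProjection_mem_orthogonal (K := Wcols M j') v
  have hnw : ‖w‖ = dd M j' := by rw [dd, dif_pos hj'q]; rfl
  have hvwp : ∀ x : Fin p, v x = w x + Pv x := by
    intro x
    simp [hw, Pi.sub_apply]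
  -- the matrices
  set colfun : Fin (j'+1) → Fin p → ℝ :=
    Fin.snoc (fun l r => N r (g0 l)) (fun r => w r) with hcolfun
  set rws : Fin p → Fin (j'+1) → Fin p := fun r => Fin.snoc f0 r with hrws
  set B : Fin p → Matrix (Fin (j'+1)) (Fin (j'+1)) ℝ :=
    fun r => Matrix.of fun i l => colfun l (rws r i) with hB
  have hr₀ : 0 < p := lt_of_lt_of_le (Nat.succ_pos j') hjp
  set r₀ : Fin p := ⟨0, hr₀⟩ with hr₀def
  have hBrow : ∀ r, B r = (B r₀).updateRow (Fin.last j') (fun l => colfun l r) := by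
    intro r
    ext i l
    rcases eq_or_ne i (Fin.last j') with rfl | hi
    · simp [hB, hrws, Matrix.updateRow_apply, Fin.snoc_last]
    · obtain ⟨i', rfl⟩ := Fin.exists_castSucc_eq.2 hi
      simp [hB, hrws, Matrix.updateRow_apply, Fin.snoc_castSucc,
        (Fin.castSucc_lt_last i').ne]
  -- membership of the first j' columns
  have hcolmem : ∀ l : Fin j', colv M (gperm M (g0 l)) ∈ Wcols M j' :=
    fun l => colv_mem_Wcols M (gperm_mem_glist M (g0 l) (le_of_lt hj'q) (hg0lt l))
  have hinner : ∀ (u : EuclideanSpace ℝ (Fin p)), u ∈ Wcols M j' →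
      ∑ r : Fin p, w r * u r = 0 := by
    intro u hu
    have h0 : inner ℝ u w = 0 := (Submodule.mem_orthogonal _ w).mp hw_orth u hu
    rw [PiLp.inner_apply] at h0
    rw [← h0]
    apply Finset.sum_congr rfl
    intro r _
    simp [RCLike.inner_apply, mul_comm]
  -- the key determinant identity
  set rowstar : Fin (j'+1) → ℝ := fun l => ∑ r : Fin p, w r * colfun l r with hrowstar
  have hrowstar_cast : ∀ l' : Fin j', rowstar (Fin.castSucc l') = 0 := by
    intro l'
    rw [hrowstar]
    simp only [hcolfun, Fin.snoc_castSucc]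
    exact hinner _ (hcolmem l')
  have hrowstar_last : rowstar (Fin.last j') = (dd M j')^2 := by
    rw [hrowstar]
    simp only [hcolfun, Fin.snoc_last]
    have : ∑ r : Fin p, w r * w r = inner ℝ w w := by
      rw [PiLp.inner_apply]
      apply Finset.sum_congr rfl
      intro r _
      simp [RCLike.inner_apply, sq]
    rw [this, real_inner_self_eq_norm_sq, hnw]
  have hkey : ∑ r : Fin p, w r * (B r).det = (dd M j')^2 * (N.submatrix f0 g0).det := by
    have hsumvec : (∑ r : Fin p, w r • (fun l => colfun l r)) = rowstar := by
      funext l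
      rw [Finset.sum_apply]
      simp [hrowstar]
    have hstar := det_updateRow_finset_sum (B r₀) (Fin.last j') Finset.univ
      (fun r : Fin p => w r) (fun r l => colfun l r)
    rw [hsumvec] at hstar
    have hlhs : ∑ r : Fin p, w r * (B r).det
        = ((B r₀).updateRow (Fin.last j') rowstar).det := by
      rw [hstar]
      apply Finset.sum_congr rfl
      intro r _
      rw [← hBrow r]
    rw [hlhs]
    -- evaluate the determinant of the star matrix
    rw [Matrix.det_succ_row _ (Fin.last j')]
    rw [Fin.sum_univ_castSucc]
    have hz : ∀ l' : Fin j',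
        (-1 : ℝ)^((Fin.last j' : ℕ) + ((Fin.castSucc l' : Fin (j'+1)) : ℕ)) *
          ((B r₀).updateRow (Fin.last j') rowstar) (Fin.last j') (Fin.castSucc l') *
          ((((B r₀).updateRow (Fin.last j') rowstar)).submatrix (Fin.last j').succAbove
            (Fin.castSucc l').succAbove).det = 0 := by
      intro l'
      rw [Matrix.updateRow_self]
      rw [hrowstar_cast l']
      ring
    rw [Finset.sum_congr rfl (fun l' _ => hz l'), Finset.sum_const, smul_zero, zero_add]
    rw [Matrix.updateRow_self, hrowstar_last]
    have hminor : (((B r₀).updateRow (Fin.last j') rowstar)).submatrix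
        (Fin.last j').succAbove (Fin.last j').succAbove = N.submatrix f0 g0 := by
      ext i' l'
      rw [Matrix.submatrix_apply, Fin.succAbove_last_apply, Fin.succAbove_last_apply]
      rw [Matrix.updateRow_ne (Fin.castSucc_lt_last i').ne]
      simp [hB, hrws, hcolfun, Fin.snoc_castSucc]
    rw [hminor]
    have hsign : (-1 : ℝ)^((Fin.last j' : ℕ) + ((Fin.last j') : ℕ)) = 1 :=
      Even.neg_one_pow ⟨(Fin.last j' : ℕ), rfl⟩
    rw [hsign]
    ring
  -- bound each |det (B r)|
  have hBG : ∀ r : Fin p, |(B r).det| ≤ G := by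
    intro r
    by_cases hr : ∃ i', f0 i' = r
    · obtain ⟨i', rfl⟩ := hr
      have : (B (f0 i')).det = 0 := by
        apply Matrix.det_zero_of_row_eq (Fin.castSucc_lt_last i').ne
        funext l
        simp [hB, hrws, Fin.snoc_castSucc, Fin.snoc_last]
      rw [this, abs_zero]
      exact hGnn
    · push_neg at hr
      have hrowinj : Function.Injective (rws r) := by
        intro a b hab
        simp only [hrws] at hab
        rcases eq_or_ne a (Fin.last j') with rfl | ha
        · rcases eq_or_ne b (Fin.last j') with rfl | hb
          · rfl
          · obtain ⟨b', rfl⟩ := Fin.exists_castSucc_eq.2 hb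
            rw [Fin.snoc_last, Fin.snoc_castSucc] at hab
            exact absurd hab.symm (hr b')
        · obtain ⟨a', rfl⟩ := Fin.exists_castSucc_eq.2 ha
          rcases eq_or_ne b (Fin.last j') with rfl | hb
          · rw [Fin.snoc_last, Fin.snoc_castSucc] at hab
            exact absurd hab (hr a')
          · obtain ⟨b', rfl⟩ := Fin.exists_castSucc_eq.2 hb
            rw [Fin.snoc_castSucc, Fin.snoc_castSucc] at hab
            rw [hf0 hab]
      set g1 : Fin (j'+1) → Fin q := Fin.snoc g0 ⟨j', hj'q⟩ with hg1
      have hg1inj : Function.Injective g1 := by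
        intro a b hab
        rcases eq_or_ne a (Fin.last j') with rfl | ha
        · rcases eq_or_ne b (Fin.last j') with rfl | hb
          · rfl
          · obtain ⟨b', rfl⟩ := Fin.exists_castSucc_eq.2 hb
            rw [hg1, Fin.snoc_last, Fin.snoc_castSucc] at hab
            have := hg0lt b'
            rw [← hab] at this
            simp at this
        · obtain ⟨a', rfl⟩ := Fin.exists_castSucc_eq.2 ha
          rcases eq_or_ne b (Fin.last j') with rfl | hb
          · rw [hg1, Fin.snoc_last, Fin.snoc_castSucc] at hab
            have := hg0lt a'
            rw [hab] at this
            simp at this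
          · obtain ⟨b', rfl⟩ := Fin.exists_castSucc_eq.2 hb
            rw [hg1, Fin.snoc_castSucc, Fin.snoc_castSucc] at hab
            rw [hg0 hab]
      have hg1lt : ∀ l, ((g1 l : Fin q) : ℕ) < j' + 1 := by
        intro l
        rcases eq_or_ne l (Fin.last j') with rfl | hl
        · simp [hg1, Fin.snoc_last]
        · obtain ⟨l', rfl⟩ := Fin.exists_castSucc_eq.2 hl
          rw [hg1, Fin.snoc_castSucc]
          exact lt_trans (hg0lt l') (Nat.lt_succ_self j')
      -- column surgery
      have hsurg : N.submatrix (rws r) g1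
          = (B r).updateCol (Fin.last j') (fun i => v (rws r i)) := by
        ext i l
        rcases eq_or_ne l (Fin.last j') with rfl | hl
        · rw [Matrix.updateCol_self]
          rw [Matrix.submatrix_apply]
          rw [hg1, Fin.snoc_last]
          rfl
        · obtain ⟨l', rfl⟩ := Fin.exists_castSucc_eq.2 hl
          rw [Matrix.updateCol_ne (Fin.castSucc_lt_last l').ne]
          rw [Matrix.submatrix_apply, hg1, Fin.snoc_castSucc]
          simp [hB, hrws, hcolfun, Fin.snoc_castSucc]
      have hvcol : (fun i => v (rws r i))
          = (fun i => w (rws r i)) + (fun i => Pv (rws r i)) := by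
        funext i
        rw [Pi.add_apply]
        exact hvwp _
      have hBcol : (B r).updateCol (Fin.last j') (fun i => w (rws r i)) = B r := by
        ext i l
        rcases eq_or_ne l (Fin.last j') with rfl | hl
        · rw [Matrix.updateCol_self]
          simp [hB, hrws, hcolfun, Fin.snoc_last]
        · rw [Matrix.updateCol_ne hl]
      -- express Pv in terms of the g0 columns
      have hspan : Wcols M j' = Submodule.span ℝ
          (Set.range (fun l : Fin j' => colv M (gperm M (g0 l)))) :=
        Wcols_eq_span M (le_of_lt hj'q) g0 hg0 hg0lt
      have hPvmem : Pv ∈ Submodule.span ℝ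
          (Set.range (fun l : Fin j' => colv M (gperm M (g0 l)))) := by
        rw [← hspan]
        exact (orthogonalProjection (Wcols M j') v).2
      obtain ⟨lam, hlam⟩ := (mem_span_range_iff_exists_fun ℝ).mp hPvmem
      have hPvcol : (fun i => Pv (rws r i))
          = ∑ l : Fin j', lam l • (fun i => N (rws r i) (g0 l)) := by
        funext i
        rw [Finset.sum_apply]
        rw [← hlam]
        rw [WithLp.ofLp_sum, Finset.sum_apply]
        apply Finset.sum_congr rfl
        intro l _
        simp [colv_apply]
        exact Or.inl rfl
      have hdets : (N.submatrix (rws r) g1).det = (B r).det := by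
        rw [hsurg, hvcol, Matrix.det_updateCol_add, hBcol, hPvcol,
          det_updateColumn_finset_sum]
        have hzero : ∀ l : Fin j', lam l *
            ((B r).updateCol (Fin.last j') (fun i => N (rws r i) (g0 l))).det = 0 := by
          intro l
          have : ((B r).updateCol (Fin.last j')
              (fun i => N (rws r i) (g0 l))).det = 0 := by
            apply Matrix.det_zero_of_column_eq (Fin.castSucc_lt_last l).ne
            intro i
            rw [Matrix.updateCol_ne (Fin.castSucc_lt_last l).ne,
              Matrix.updateCol_self]
            simp [hB, hrws, hcolfun, Fin.snoc_castSucc]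
          rw [this, mul_zero]
        rw [Finset.sum_congr rfl (fun l _ => hzero l), Finset.sum_const, smul_zero, add_zero]
      rw [← hdets]
      exact le_maxSubdetRestr (j'+1) (j'+1) N hrowinj hg1inj hg1lt
  -- put it together
  have hbound : (dd M j')^2 * |(N.submatrix f0 g0).det| ≤ (p : ℝ) * (dd M j' * G) := by
    have h1 : (dd M j')^2 * |(N.submatrix f0 g0).det|
        = |∑ r : Fin p, w r * (B r).det| := by
      rw [hkey, abs_mul, abs_of_nonneg (sq_nonneg (dd M j'))]
    rw [h1]
    calc |∑ r : Fin p, w r * (B r).det| ≤ ∑ r : Fin p, |w r * (B r).det| :=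
          Finset.abs_sum_le_sum_abs _ _
      _ ≤ ∑ _r : Fin p, dd M j' * G := by
          apply Finset.sum_le_sum
          intro r _
          rw [abs_mul]
          apply mul_le_mul ?_ (hBG r) (abs_nonneg _) hddnn
          rw [← hnw]
          exact abs_apply_le_norm w r
      _ = (p : ℝ) * (dd M j' * G) := by
          rw [Finset.sum_const, Finset.card_univ, Fintype.card_fin, nsmul_eq_mul]
  have h2 : (dd M j')^2 * G' ≤ (p : ℝ) * (dd M j' * G) := by
    refine le_trans ?_ hbound
    apply mul_le_mul_of_nonneg_left hatt (sq_nonneg _)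
  have h3 : dd M j' * (dd M j' * G') ≤ dd M j' * ((p:ℝ) * G) := by
    calc dd M j' * (dd M j' * G') = (dd M j')^2 * G' := by ring
      _ ≤ (p : ℝ) * (dd M j' * G) := h2
      _ = dd M j' * ((p:ℝ) * G) := by ring
  exact le_of_mul_le_mul_left h3 hddpos



lemma finrank_Wcols_le (M : Matrix (Fin p) (Fin q) ℝ) (j : ℕ) (hj : j ≤ q) :
    Module.finrank ℝ (Wcols M j) ≤ j := by
  have heq : Wcols M j = Submodule.span ℝ
      (Set.range (fun i : Fin (glist M j).length => colv M ((glist M j).get i))) := by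
    unfold Wcols Wlist
    congr 1
    ext x
    constructor
    · rintro ⟨c, hc, rfl⟩
      obtain ⟨i, hi⟩ := List.mem_iff_get.mp hc
      refine ⟨i, ?_⟩
      show colv M ((glist M j).get i) = colv M c
      rw [hi]
    · rintro ⟨i, rfl⟩
      exact ⟨(glist M j).get i, List.get_mem _ i, rfl⟩
  rw [heq]
  have h1 := finrank_range_le_card (R := ℝ)
    (fun i : Fin (glist M j).length => colv M ((glist M j).get i))
  unfold Set.finrank at h1
  calc Module.finrank ℝ _ ≤ Fintype.card (Fin (glist M j).length) := h1
    _ = j := by rw [Fintype.card_fin, glist_length M j hj]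

lemma det_eq_zero_of_cols_dep {k' : ℕ} (W : Submodule ℝ (EuclideanSpace ℝ (Fin p)))
    (hrank : Module.finrank ℝ W ≤ k') (V : Fin (k'+1) → EuclideanSpace ℝ (Fin p))
    (hV : ∀ l, V l ∈ W) (f : Fin (k'+1) → Fin p) :
    (Matrix.of fun i l => V l (f i)).det = 0 := by
  have hnli : ¬ LinearIndependent ℝ V := by
    intro hli
    have hli' : LinearIndependent ℝ (fun l => (⟨V l, hV l⟩ : W)) := by
      apply LinearIndependent.of_comp W.subtype
      exact hli
    have hcard := hli'.fintype_card_le_finrank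
    rw [Fintype.card_fin] at hcard
    omega
  obtain ⟨g, hsum, l₀, hl₀⟩ := Fintype.not_linearIndependent_iff.mp hnli
  apply Matrix.exists_mulVec_eq_zero_iff.mp
  refine ⟨g, fun h0 => hl₀ (by rw [h0]; rfl), ?_⟩
  funext i
  have h2 : ∑ l, g l * V l (f i) = 0 := by
    have hgen : ∀ s : Finset (Fin (k'+1)),
        (∑ l ∈ s, g l • V l) (f i) = ∑ l ∈ s, g l * V l (f i) := by
      intro s
      induction s using Finset.induction_on with
      | empty => simp
      | @insert a s ha ih =>
        rw [Finset.sum_insert ha, Finset.sum_insert ha, ← ih]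
        rfl
    have happ := congrArg (fun x : EuclideanSpace ℝ (Fin p) => x (f i)) hsum
    simp only at happ
    rw [← hgen Finset.univ]
    rw [happ]
    rfl
  simp only [Matrix.mulVec, dotProduct, Matrix.of_apply, Pi.zero_apply]
  calc ∑ l, V l (f i) * g l = ∑ l, g l * V l (f i) := by
        apply Finset.sum_congr rfl; intro l _; ring
    _ = 0 := h2

lemma chainU (M : Matrix (Fin p) (Fin q) ℝ) (k : ℕ) (hkp : k ≤ p) (hkq : k ≤ q)
    (hk1 : 1 ≤ k) : ∀ a, a ≤ k →
    (dd M (k-1))^a * maxSubdetRestr (k-a) (k-a) (M.submatrix id ⇑(gperm M)) ≤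
      (p:ℝ)^a * maxSubdetRestr k k (M.submatrix id ⇑(gperm M)) := by
  intro a
  induction a with
  | zero => intro _; simp
  | succ a ih =>
    intro ha
    set N := M.submatrix id ⇑(gperm M) with hN
    have ha' : a ≤ k := Nat.le_of_succ_le ha
    have hklt : k - 1 < q := by omega
    have h1 : dd M (k-1) ≤ dd M (k-a-1) := dd_antitone M (by omega) hklt
    have h2 : dd M (k-a-1) * maxSubdetRestr (k-a-1) (k-a-1) N
        ≤ (p:ℝ) * maxSubdetRestr (k-a) (k-a) N := by
      have := lemA M (k-a-1) (by omega) (by omega)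
      have heq : k-a-1+1 = k-a := by omega
      rwa [heq] at this
    have hGnn := maxSubdetRestr_nonneg (k-(a+1)) (k-(a+1)) N
    have hGnn2 := maxSubdetRestr_nonneg (k-a) (k-a) N
    have hGnn3 := maxSubdetRestr_nonneg k k N
    have hddnn := dd_nonneg M (k-1)
    have hddnn2 := dd_nonneg M (k-a-1)
    have hpow : (0:ℝ) ≤ (dd M (k-1))^a := pow_nonneg hddnn a
    have heq1 : k - (a+1) = k - a - 1 := by omega
    calc (dd M (k-1))^(a+1) * maxSubdetRestr (k-(a+1)) (k-(a+1)) N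
        = (dd M (k-1))^a * (dd M (k-1) * maxSubdetRestr (k-a-1) (k-a-1) N) := by
          rw [heq1, pow_succ]; ring
      _ ≤ (dd M (k-1))^a * (dd M (k-a-1) * maxSubdetRestr (k-a-1) (k-a-1) N) := by
          apply mul_le_mul_of_nonneg_left ?_ hpow
          apply mul_le_mul_of_nonneg_right h1 (by rw [← heq1]; exact hGnn)
      _ ≤ (dd M (k-1))^a * ((p:ℝ) * maxSubdetRestr (k-a) (k-a) N) :=
          mul_le_mul_of_nonneg_left h2 hpow
      _ = (p:ℝ) * ((dd M (k-1))^a * maxSubdetRestr (k-a) (k-a) N) := by ring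
      _ ≤ (p:ℝ) * ((p:ℝ)^a * maxSubdetRestr k k N) :=
          mul_le_mul_of_nonneg_left (ih ha') (Nat.cast_nonneg p)
      _ = (p:ℝ)^(a+1) * maxSubdetRestr k k N := by rw [pow_succ]; ring

noncomputable def Sconst (p : ℕ) : ℕ → ℝ
  | 0 => 1
  | k+1 => 2^(k+1) * (((k:ℝ)+1))^(k+1) * ((p:ℝ)+1)^(k+1) * Sconst p k

lemma one_le_Sconst (p : ℕ) (k : ℕ) : 1 ≤ Sconst p k := by
  induction k with
  | zero => simp [Sconst]
  | succ k ih =>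
    rw [Sconst]
    have h1 : (1:ℝ) ≤ 2^(k+1) := one_le_pow₀ (by norm_num)
    have h2 : (1:ℝ) ≤ ((k:ℝ)+1)^(k+1) :=
      one_le_pow₀ (by have := Nat.cast_nonneg (α := ℝ) k; linarith)
    have h3 : (1:ℝ) ≤ ((p:ℝ)+1)^(k+1) :=
      one_le_pow₀ (by have := Nat.cast_nonneg (α := ℝ) p; linarith)
    have h12 : (1:ℝ) ≤ 2^(k+1) * ((k:ℝ)+1)^(k+1) := by nlinarith
    have h123 : (1:ℝ) ≤ 2^(k+1) * ((k:ℝ)+1)^(k+1) * ((p:ℝ)+1)^(k+1) := by nlinarith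
    nlinarith

lemma Sconst_mono (p : ℕ) {j k : ℕ} (h : j ≤ k) : Sconst p j ≤ Sconst p k := by
  induction k with
  | zero => rw [Nat.le_zero.mp h]
  | succ k ih =>
    rcases Nat.lt_or_ge j (k+1) with h' | h'
    · have hle := ih (Nat.lt_succ_iff.mp h')
      refine hle.trans ?_
      rw [Sconst]
      have h1 : (1:ℝ) ≤ 2^(k+1) := one_le_pow₀ (by norm_num)
      have h2 : (1:ℝ) ≤ ((k:ℝ)+1)^(k+1) :=
        one_le_pow₀ (by have := Nat.cast_nonneg (α := ℝ) k; linarith)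
      have h3 : (1:ℝ) ≤ ((p:ℝ)+1)^(k+1) :=
        one_le_pow₀ (by have := Nat.cast_nonneg (α := ℝ) p; linarith)
      have h4 := one_le_Sconst p k
      have h12 : (1:ℝ) ≤ 2^(k+1) * ((k:ℝ)+1)^(k+1) := by nlinarith
      have h123 : (1:ℝ) ≤ 2^(k+1) * ((k:ℝ)+1)^(k+1) * ((p:ℝ)+1)^(k+1) := by nlinarith
      nlinarith
    · rw [Nat.le_antisymm h h']

lemma mainV (M : Matrix (Fin p) (Fin q) ℝ) :
    ∀ k, k ≤ p → k ≤ q → maxSubdet k (M.submatrix id ⇑(gperm M)) ≤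
      Sconst p k * maxSubdetRestr k k (M.submatrix id ⇑(gperm M)) := by
  intro k
  induction k using Nat.strong_induction_on with
  | _ k IH =>
    intro hkp hkq
    cases k with
    | zero =>
      rw [maxSubdet_zero, maxSubdetRestr_zero]
      simp [Sconst]
    | succ k' =>
      set N := M.submatrix id ⇑(gperm M) with hN
      set k := k' + 1 with hk
      set δ := dd M k' with hδ
      have hδnn : 0 ≤ δ := dd_nonneg M k'
      set G : ℝ := maxSubdetRestr k k N with hG
      have hGnn : 0 ≤ G := maxSubdetRestr_nonneg _ _ _
      have hSnn : (0:ℝ) ≤ Sconst p k' := le_trans zero_le_one (one_le_Sconst p k')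
      refine maxSubdet_le k N
        (mul_nonneg (le_trans zero_le_one (one_le_Sconst p k)) hGnn) ?_
      intro f g hf hg
      classical
      -- decompositions of the columns
      set vcol : Fin k → EuclideanSpace ℝ (Fin p) := fun l => colv M (gperm M (g l)) with hvcol
      set Pcol : Fin k → EuclideanSpace ℝ (Fin p) :=
        fun l => (orthogonalProjection (Wcols M k') (vcol l) : EuclideanSpace ℝ (Fin p)) with hPcol
      set wcol : Fin k → EuclideanSpace ℝ (Fin p) := fun l => vcol l - Pcol l with hwcol
      have hwnorm : ∀ l, ‖wcol l‖ ≤ δ := by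
        intro l
        have := resid_le_dd M (show k' < q by omega) (gperm M (g l))
        exact this
      set X : Matrix (Fin k) (Fin k) ℝ := Matrix.of fun i l => N (f i) (g l) with hX
      set Y : Matrix (Fin k) (Fin k) ℝ := Matrix.of fun i l => -(wcol l (f i)) with hY
      have hexpand := det_expand (Finset.univ : Finset (Fin k)) X Y
      have hXY : (Matrix.of fun i j => if j ∈ (Finset.univ : Finset (Fin k))
          then X i j + Y i j else X i j) = Matrix.of fun i l => Pcol l (f i) := by
        ext i l
        simp only [Matrix.of_apply, Finset.mem_univ, if_true, hX, hY, Matrix.of_apply]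
        have : vcol l (f i) - Pcol l (f i) = wcol l (f i) := by
          rw [hwcol]; simp [PiLp.sub_apply]
        have hNv : N (f i) (g l) = vcol l (f i) := rfl
        rw [hNv]
        linarith [this]
      have hzero : (Matrix.of fun i l => Pcol l (f i)).det = 0 := by
        apply det_eq_zero_of_cols_dep (Wcols M k') (finrank_Wcols_le M k' (by omega))
        intro l
        exact (orthogonalProjection (Wcols M k') (vcol l)).2
      rw [hXY, hzero] at hexpand
      -- isolate the empty set term
      have hmemE : (∅ : Finset (Fin k)) ∈ (Finset.univ : Finset (Fin k)).powerset := by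
        simp
      have hsplit := (Finset.add_sum_erase _ (fun A : Finset (Fin k) =>
        (Matrix.of fun i j => if j ∈ A then Y i j else X i j).det) hmemE).symm
      rw [← hexpand] at hsplit
      have hempty : (Matrix.of fun i j => if j ∈ (∅ : Finset (Fin k)) then Y i j else X i j)
          = N.submatrix f g := by
        ext i j
        simp [hX]
      rw [hempty] at hsplit
      -- so det (N.submatrix f g) = - sum of the rest
      have hdeteq : (N.submatrix f g).det
          = -∑ A ∈ ((Finset.univ : Finset (Fin k)).powerset.erase ∅),
              (Matrix.of fun i j => if j ∈ A then Y i j else X i j).det := by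
        linarith [hsplit]
      -- bound each term
      have hterm : ∀ A ∈ (Finset.univ : Finset (Fin k)).powerset.erase ∅,
          |(Matrix.of fun i j => if j ∈ A then Y i j else X i j).det|
            ≤ ((k:ℕ):ℝ)^k * Sconst p k' * ((p:ℝ)+1)^k * G := by
        intro A hA
        have hAne : A ≠ ∅ := (Finset.mem_erase.mp hA).1
        have hAcard : 1 ≤ A.card := by
          rcases Finset.card_pos.mpr (Finset.nonempty_of_ne_empty hAne) with h
          omega
        have hAle : A.card ≤ k := by
          have := Finset.card_le_card (Finset.subset_univ A)
          simpa using this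
        set c : Fin k → Option (Fin q) := fun l => if l ∈ A then none else some (gperm M (g l))
          with hc
        have hb := bcore M δ hδnn k (Matrix.of fun i j => if j ∈ A then Y i j else X i j) f c
          hf ?_ ?_ ?_
        · have hcard1 : (Finset.univ.filter (fun j => c j = none)).card = A.card := by
            congr 1
            ext l
            simp only [Finset.mem_filter, Finset.mem_univ, true_and, hc]
            by_cases hl : l ∈ A <;> simp [hl]
          have hcard2 : (Finset.univ.filter (fun j => (c j).isSome)).card = k - A.card := by
            have : Finset.univ.filter (fun j => (c j).isSome) = Aᶜ := by
              ext l
              simp only [Finset.mem_filter, Finset.mem_univ, true_and, hc, Finset.mem_compl]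
              by_cases hl : l ∈ A <;> simp [hl]
            rw [this, Finset.card_compl]
            simp
          rw [hcard1, hcard2] at hb
          -- combine with IH and the chain lemma
          have hIH : maxSubdet (k - A.card) M ≤ Sconst p (k - A.card) *
              maxSubdetRestr (k - A.card) (k - A.card) N := by
            rw [← maxSubdet_perm (k - A.card) M (gperm M)]
            exact IH (k - A.card) (by omega) (by omega) (by omega)
          have hchain : δ^(A.card) * maxSubdetRestr (k - A.card) (k - A.card) N
              ≤ (p:ℝ)^(A.card) * G := by
            have := chainU M k hkp hkq (by omega) A.card hAle
            have hk1 : k - 1 = k' := by omega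
            rw [hk1] at this
            exact this
          have hGAnn := maxSubdetRestr_nonneg (k - A.card) (k - A.card) N
          have hDnn := maxSubdet_nonneg (k - A.card) M
          have hSmono : Sconst p (k - A.card) ≤ Sconst p k' := Sconst_mono p (by omega)
          have hppow : ((p:ℝ))^(A.card) ≤ ((p:ℝ)+1)^k := by
            calc ((p:ℝ))^(A.card) ≤ ((p:ℝ)+1)^(A.card) :=
                  pow_le_pow_left₀ (Nat.cast_nonneg p) (by linarith) _
              _ ≤ ((p:ℝ)+1)^k := pow_le_pow_right₀ (by linarith [Nat.cast_nonneg (α := ℝ) p]) hAle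
          have hknn : (0:ℝ) ≤ ((k:ℕ):ℝ)^k := by positivity
          have hδpow : (0:ℝ) ≤ δ^(A.card) := pow_nonneg hδnn _
          calc |(Matrix.of fun i j => if j ∈ A then Y i j else X i j).det|
              ≤ ((k:ℕ):ℝ)^k * δ^(A.card) * maxSubdet (k - A.card) M := hb
            _ ≤ ((k:ℕ):ℝ)^k * δ^(A.card) * (Sconst p (k - A.card) *
                  maxSubdetRestr (k - A.card) (k - A.card) N) :=
                mul_le_mul_of_nonneg_left hIH (mul_nonneg hknn hδpow)
            _ = ((k:ℕ):ℝ)^k * Sconst p (k - A.card) * (δ^(A.card) *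
                  maxSubdetRestr (k - A.card) (k - A.card) N) := by ring
            _ ≤ ((k:ℕ):ℝ)^k * Sconst p (k - A.card) * ((p:ℝ)^(A.card) * G) :=
                mul_le_mul_of_nonneg_left hchain
                  (mul_nonneg hknn (le_trans zero_le_one (one_le_Sconst p _)))
            _ ≤ ((k:ℕ):ℝ)^k * Sconst p k' * (((p:ℝ)+1)^k * G) := by
                have hs0 : (0:ℝ) ≤ Sconst p (k - A.card) :=
                  le_trans zero_le_one (one_le_Sconst p _)
                have h1 : (p:ℝ)^(A.card) * G ≤ ((p:ℝ)+1)^k * G :=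
                  mul_le_mul_of_nonneg_right hppow hGnn
                have h2 : ((k:ℕ):ℝ)^k * Sconst p (k - A.card) ≤ ((k:ℕ):ℝ)^k * Sconst p k' :=
                  mul_le_mul_of_nonneg_left hSmono hknn
                have hpgnn : (0:ℝ) ≤ (p:ℝ)^(A.card) * G :=
                  mul_nonneg (pow_nonneg (Nat.cast_nonneg p) _) hGnn
                have hky : (0:ℝ) ≤ ((k:ℕ):ℝ)^k * Sconst p k' := mul_nonneg hknn hSnn
                calc ((k:ℕ):ℝ)^k * Sconst p (k - A.card) * ((p:ℝ)^(A.card) * G)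
                    ≤ ((k:ℕ):ℝ)^k * Sconst p k' * ((p:ℝ)^(A.card) * G) :=
                      mul_le_mul_of_nonneg_right h2 hpgnn
                  _ ≤ ((k:ℕ):ℝ)^k * Sconst p k' * (((p:ℝ)+1)^k * G) :=
                      mul_le_mul_of_nonneg_left h1 hky
            _ = ((k:ℕ):ℝ)^k * Sconst p k' * ((p:ℝ)+1)^k * G := by ring
        · -- injectivity on somes
          intro i j x hi hj
          rw [hc] at hi hj
          by_cases hiA : i ∈ A
          · simp [hiA] at hi
          · by_cases hjA : j ∈ A
            · simp [hjA] at hj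
            · simp [hiA] at hi
              simp [hjA] at hj
              exact hg ((gperm M).injective (hi.symm ▸ hj.symm ▸ rfl))
        · -- some entries
          intro i j x hx
          rw [hc] at hx
          by_cases hjA : j ∈ A
          · simp [hjA] at hx
          · simp [hjA] at hx
            simp only [Matrix.of_apply, hjA, if_false]
            rw [← hx]
            rfl
        · -- none entries
          intro i j hx
          rw [hc] at hx
          by_cases hjA : j ∈ A
          · simp only [Matrix.of_apply, hjA, if_true, hY, Matrix.of_apply]
            rw [abs_neg]
            exact le_trans (abs_apply_le_norm _ _) (hwnorm j)
          · simp [hjA] at hx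
      -- sum up
      have hcard2k : (((Finset.univ : Finset (Fin k)).powerset.erase ∅)).card ≤ 2^k := by
        calc (((Finset.univ : Finset (Fin k)).powerset.erase ∅)).card
            ≤ ((Finset.univ : Finset (Fin k)).powerset).card := Finset.card_erase_le
          _ = 2^k := by rw [Finset.card_powerset]; simp
      calc |(N.submatrix f g).det|
          = |∑ A ∈ ((Finset.univ : Finset (Fin k)).powerset.erase ∅),
              (Matrix.of fun i j => if j ∈ A then Y i j else X i j).det| := by
            rw [hdeteq, abs_neg]
        _ ≤ ∑ A ∈ ((Finset.univ : Finset (Fin k)).powerset.erase ∅),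
              |(Matrix.of fun i j => if j ∈ A then Y i j else X i j).det| :=
            Finset.abs_sum_le_sum_abs _ _
        _ ≤ ∑ _A ∈ ((Finset.univ : Finset (Fin k)).powerset.erase ∅),
              ((k:ℕ):ℝ)^k * Sconst p k' * ((p:ℝ)+1)^k * G :=
            Finset.sum_le_sum hterm
        _ = (((Finset.univ : Finset (Fin k)).powerset.erase ∅)).card *
              (((k:ℕ):ℝ)^k * Sconst p k' * ((p:ℝ)+1)^k * G) := by
            rw [Finset.sum_const, nsmul_eq_mul]
        _ ≤ 2^k * (((k:ℕ):ℝ)^k * Sconst p k' * ((p:ℝ)+1)^k * G) := by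
            have hrestnn : (0:ℝ) ≤ ((k:ℕ):ℝ)^k * Sconst p k' * ((p:ℝ)+1)^k * G := by
              have h3 : (0:ℝ) ≤ ((p:ℝ)+1)^k :=
                pow_nonneg (by have := Nat.cast_nonneg (α := ℝ) p; linarith) _
              have hknn : (0:ℝ) ≤ ((k:ℕ):ℝ)^k := by positivity
              exact mul_nonneg (mul_nonneg (mul_nonneg hknn hSnn) h3) hGnn
            apply mul_le_mul_of_nonneg_right ?_ hrestnn
            calc ((((Finset.univ : Finset (Fin k)).powerset.erase ∅)).card : ℝ)
                ≤ ((2^k : ℕ) : ℝ) := Nat.cast_le.mpr hcard2k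
              _ = 2^k := by push_cast; ring
        _ = Sconst p k * G := by
            rw [hk, Sconst]
            push_cast
            ring

end Stmt3Aux

/-- the columns of any real `p × q` matrix can be permuted so that, for every
`k ≤ ℓ ≤ min(p,q)`, the maximal `k × k` subdeterminant of the first `ℓ` columns is comparable
(with constants depending only on `p, q`) to the maximal `k × k` subdeterminant of the whole
matrix. -/
theorem stmt3 (p q : ℕ) :
    ∃ C : ℝ, 0 < C ∧
      ∀ M : Matrix (Fin p) (Fin q) ℝ, ∃ e : Equiv.Perm (Fin q),
        ∀ k ℓ : ℕ, k ≤ ℓ → ℓ ≤ min p q →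
          maxSubdet k M ≤ C * maxSubdetRestr k ℓ (M.submatrix id e) ∧
            maxSubdetRestr k ℓ (M.submatrix id e) ≤ C * maxSubdet k M := by
  classical
  refine ⟨Stmt3Aux.Sconst p (min p q),
    lt_of_lt_of_le zero_lt_one (Stmt3Aux.one_le_Sconst p _), fun M => ?_⟩
  refine ⟨Stmt3Aux.gperm M, fun k ℓ hkl hlm => ?_⟩
  set N := M.submatrix id ⇑(Stmt3Aux.gperm M) with hN
  have hkp : k ≤ p := le_trans hkl (le_trans hlm (min_le_left p q))
  have hkq : k ≤ q := le_trans hkl (le_trans hlm (min_le_right p q))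
  have hperm : maxSubdet k N = maxSubdet k M := Stmt3Aux.maxSubdet_perm k M (Stmt3Aux.gperm M)
  have hSnn : (0:ℝ) ≤ Stmt3Aux.Sconst p k :=
    le_trans zero_le_one (Stmt3Aux.one_le_Sconst p k)
  have hSmono : Stmt3Aux.Sconst p k ≤ Stmt3Aux.Sconst p (min p q) :=
    Stmt3Aux.Sconst_mono p (le_trans hkl hlm)
  constructor
  · calc maxSubdet k M = maxSubdet k N := hperm.symm
      _ ≤ Stmt3Aux.Sconst p k * maxSubdetRestr k k N := Stmt3Aux.mainV M k hkp hkq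
      _ ≤ Stmt3Aux.Sconst p (min p q) * maxSubdetRestr k ℓ N := by
          apply mul_le_mul hSmono (Stmt3Aux.maxSubdetRestr_mono k hkl N)
            (Stmt3Aux.maxSubdetRestr_nonneg k k N) (le_trans hSnn hSmono)
  · calc maxSubdetRestr k ℓ N ≤ maxSubdet k N := Stmt3Aux.maxSubdetRestr_le_maxSubdet k ℓ N
      _ = maxSubdet k M := hperm
      _ ≤ Stmt3Aux.Sconst p (min p q) * maxSubdet k M :=
          le_mul_of_one_le_left (Stmt3Aux.maxSubdet_nonneg k M)
            (le_trans (Stmt3Aux.one_le_Sconst p k) hSmono)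
end

section
/- Let x^{(1)},…,x^{(d)} ∈ ℝ^d and let X denote the d×d matrix with columns x^{(i)}. Then the Lebesgue measure of the set { Σ_{i=1}^d t_i x^{(i)} + w : |t_i| ≤ 1 for all i, |w| ≤ 1 } is at most C(d) · (1 + Σ_{k=1}^d D_k(X)), where D_k(X) is the maximal absolute value of a k×k subdeterminant of X and C(d) depends only on d. -/
open Matrix MeasureTheory
open scoped BigOperators

lemma maxSubdet_nonneg {p q : ℕ} (k : ℕ) (M : Matrix (Fin p) (Fin q) ℝ) :
    0 ≤ maxSubdet k M := by
  apply Real.iSup_nonneg; intro f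
  apply Real.iSup_nonneg; intro g
  apply Real.iSup_nonneg; intro hf
  apply Real.iSup_nonneg; intro hg
  exact abs_nonneg _

lemma le_maxSubdet {p q : ℕ} {k : ℕ} (M : Matrix (Fin p) (Fin q) ℝ)
    {f : Fin k → Fin p} {g : Fin k → Fin q}
    (hf : Function.Injective f) (hg : Function.Injective g) :
    |(M.submatrix f g).det| ≤ maxSubdet k M := by
  have h1 : |(M.submatrix f g).det|
      = ⨆ (_ : Function.Injective f) (_ : Function.Injective g),
          |(M.submatrix f g).det| := by
    rw [ciSup_pos hf, ciSup_pos hg]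
  rw [h1]
  calc (⨆ (_ : Function.Injective f) (_ : Function.Injective g), |(M.submatrix f g).det|)
      ≤ ⨆ (g : Fin k → Fin q) (_ : Function.Injective f) (_ : Function.Injective g),
          |(M.submatrix f g).det| :=
        le_ciSup (f := fun g => ⨆ (_ : Function.Injective f)
          (_ : Function.Injective g), |(M.submatrix f g).det|) (Finite.bddAbove_range _) g
    _ ≤ maxSubdet k M :=
        le_ciSup (f := fun f => ⨆ (g : Fin k → Fin q) (_ : Function.Injective f)
          (_ : Function.Injective g), |(M.submatrix f g).det|) (Finite.bddAbove_range _) f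

lemma key_det_bound (d : ℕ) (X : Matrix (Fin d) (Fin d) ℝ) :
    ∀ n (r : Fin n → Fin d), Function.Injective r → ∀ c : Fin n → (Fin d) ⊕ (Fin d),
    |(Matrix.of fun i j => Sum.elim (fun q => X (r i) q)
        (fun p => if r i = p then (1:ℝ) else 0) (c j)).det|
      ≤ 1 + ∑ k ∈ Finset.Icc 1 d, maxSubdet k X := by
  have hRHS : (0:ℝ) ≤ 1 + ∑ k ∈ Finset.Icc 1 d, maxSubdet k X := by
    have : (0:ℝ) ≤ ∑ k ∈ Finset.Icc 1 d, maxSubdet k X :=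
      Finset.sum_nonneg fun k _ => maxSubdet_nonneg k X
    linarith
  intro n
  induction n with
  | zero =>
    intro r hr c
    have : (Matrix.of fun i j => Sum.elim (fun q => X (r i) q)
        (fun p => if r i = p then (1:ℝ) else 0) (c j)).det = 1 :=
      Matrix.det_fin_zero
    rw [this, abs_one]
    have : (0:ℝ) ≤ ∑ k ∈ Finset.Icc 1 d, maxSubdet k X :=
      Finset.sum_nonneg fun k _ => maxSubdet_nonneg k X
    linarith
  | succ n ih =>
    intro r hr c
    set A : Matrix (Fin (n+1)) (Fin (n+1)) ℝ :=
      Matrix.of fun i j => Sum.elim (fun q => X (r i) q)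
        (fun p => if r i = p then (1:ℝ) else 0) (c j) with hA
    by_cases hc : ∃ j p, c j = Sum.inr p
    · obtain ⟨j, p, hj⟩ := hc
      have hcol : ∀ i, A i j = if r i = p then (1:ℝ) else 0 := by
        intro i; simp [hA, hj]
      by_cases hp : ∃ i₀, r i₀ = p
      · obtain ⟨i₀, hi₀⟩ := hp
        have hzero : ∀ i, i ≠ i₀ → A i j = 0 := by
          intro i hi
          rw [hcol i, if_neg]
          intro h
          exact hi (hr (h.trans hi₀.symm))
        have hexp : A.det = (-1)^(i₀+j : ℕ) * A i₀ j
            * (A.submatrix i₀.succAbove j.succAbove).det := by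
          rw [Matrix.det_succ_column A j]
          refine Finset.sum_eq_single i₀ ?_ (by simp)
          intro i _ hi
          rw [hzero i hi]; ring
        have hone : A i₀ j = 1 := by rw [hcol i₀, if_pos hi₀]
        have hsub : |A.det| = |(A.submatrix i₀.succAbove j.succAbove).det| := by
          rw [hexp, hone, abs_mul, abs_mul, abs_pow, abs_neg, abs_one, one_pow]
          ring
        rw [hsub]
        have := ih (r ∘ i₀.succAbove)
          (hr.comp (Fin.succAbove_right_injective)) (c ∘ j.succAbove)
        exact this
      · push_neg at hp
        have : A.det = 0 := by
          apply Matrix.det_eq_zero_of_column_eq_zero j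
          intro i
          rw [hcol i, if_neg (hp i)]
        rw [this, abs_zero]; exact hRHS
    · push_neg at hc
      set g : Fin (n+1) → Fin d := fun j => Sum.elim id id (c j) with hg
      have hcj : ∀ j, c j = Sum.inl (g j) := by
        intro j
        rcases hcj' : c j with q | p
        · simp [hg, hcj']
        · exact absurd hcj' (hc j p)
      have hAX : A = X.submatrix r g := by
        ext i j
        rw [hA]
        show Sum.elim (fun q => X (r i) q) (fun p => if r i = p then (1:ℝ) else 0) (c j) = _
        rw [hcj j]
        rfl
      by_cases hginj : Function.Injective g
      · have h1 : |A.det| ≤ maxSubdet (n+1) X := by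
          rw [hAX]; exact le_maxSubdet X hr hginj
        have hnd : n + 1 ≤ d := by
          have := Fintype.card_le_of_injective r hr
          simpa using this
        have hmem : n + 1 ∈ Finset.Icc 1 d := Finset.mem_Icc.2 ⟨Nat.succ_le_succ (Nat.zero_le n), hnd⟩
        have h2 : maxSubdet (n+1) X ≤ ∑ k ∈ Finset.Icc 1 d, maxSubdet k X :=
          Finset.single_le_sum (fun k _ => maxSubdet_nonneg k X) hmem
        linarith
      · rw [Function.not_injective_iff] at hginj
        obtain ⟨a, b, hab, hne⟩ := hginj
        have : A.det = 0 := by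
          apply Matrix.det_zero_of_column_eq hne
          intro i
          rw [hAX]
          simp [Matrix.submatrix_apply, hab]
        rw [this, abs_zero]; exact hRHS

lemma euclid_sum_apply {ι : Type*} [Fintype ι] {κ : Type*} (s : Finset κ)
    (f : κ → EuclideanSpace ℝ ι) (p : ι) : (∑ j ∈ s, f j) p = ∑ j ∈ s, f j p := by
  classical
  induction s using Finset.induction with
  | empty => rfl
  | insert a s h ih => rw [Finset.sum_insert h, Finset.sum_insert h, PiLp.add_apply, ih]

/-- the measure of `{∑ tᵢ x⁽ⁱ⁾ + w : |tᵢ| ≤ 1, |w| ≤ 1}` is at most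
`C(d) (1 + ∑_{k=1}^d D_k(X))`, where `X` is the matrix with columns `x⁽ⁱ⁾`. -/
theorem stmt4 (d : ℕ) :
    ∃ C : ℝ, 0 < C ∧
      ∀ x : Fin d → EuclideanSpace ℝ (Fin d),
        volume {z : EuclideanSpace ℝ (Fin d) |
            ∃ (t : Fin d → ℝ) (w : EuclideanSpace ℝ (Fin d)),
              (∀ i, |t i| ≤ 1) ∧ ‖w‖ ≤ 1 ∧ z = (∑ i, t i • x i) + w} ≤
          ENNReal.ofReal
            (C * (1 + ∑ k ∈ Finset.Icc 1 d, maxSubdet k (Matrix.of fun i j => x j i))) := by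
  refine ⟨(4*(d:ℝ)+1)^d, by positivity, ?_⟩
  intro x
  set X : Matrix (Fin d) (Fin d) ℝ := Matrix.of fun i j => x j i with hX
  set v : (Fin d ⊕ Fin d) → EuclideanSpace ℝ (Fin d) :=
    Sum.elim x (fun p => EuclideanSpace.single p 1) with hv
  set N : (Fin d → Fin d ⊕ Fin d) → Matrix (Fin d) (Fin d) ℝ :=
    fun ι => Matrix.of (fun i j => v (ι j) i) with hN
  -- choose a maximizing injective column selection
  obtain ⟨ι₀, hι₀mem, hι₀max⟩ := Finset.exists_max_image
    ((Finset.univ : Finset (Fin d → Fin d ⊕ Fin d)).filter fun ι => Function.Injective ι)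
    (fun ι => |(N ι).det|)
    ⟨Sum.inr, Finset.mem_filter.2 ⟨Finset.mem_univ _, Sum.inr_injective⟩⟩
  have hι₀inj : Function.Injective ι₀ := (Finset.mem_filter.1 hι₀mem).2
  have hmax : ∀ ι, Function.Injective ι → |(N ι).det| ≤ |(N ι₀).det| := fun ι hι =>
    hι₀max ι (Finset.mem_filter.2 ⟨Finset.mem_univ _, hι⟩)
  have hNinr : N Sum.inr = 1 := by
    ext i j
    simp [hN, hv, EuclideanSpace.single_apply, Matrix.one_apply]
  have h1le : 1 ≤ |(N ι₀).det| := by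
    have h := hmax Sum.inr Sum.inr_injective
    rw [hNinr, Matrix.det_one, abs_one] at h
    exact h
  have hdet0 : (N ι₀).det ≠ 0 := by
    intro h; rw [h, abs_zero] at h1le; linarith
  -- Cramer coefficients
  set cvec : (Fin d ⊕ Fin d) → Fin d → ℝ :=
    fun j => ((N ι₀).det)⁻¹ • (Matrix.cramer (N ι₀) (fun p => v j p)) with hcvec
  have hmul : ∀ j, (N ι₀) *ᵥ (cvec j) = fun p => v j p := by
    intro j
    rw [hcvec]
    rw [Matrix.mulVec_smul, Matrix.mulVec_cramer, smul_smul,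
      inv_mul_cancel₀ hdet0, one_smul]
  have hcbound : ∀ j i, |cvec j i| ≤ 1 := by
    intro j i
    have hupd : (N ι₀).updateCol i (fun p => v j p) = N (Function.update ι₀ i j) := by
      ext a b
      by_cases hb : b = i
      · subst hb; simp [Matrix.updateCol_apply, hN, Function.update]
      · simp [Matrix.updateCol_apply, hb, hN, Function.update_of_ne hb]
    have hdu : |((N ι₀).updateCol i (fun p => v j p)).det| ≤ |(N ι₀).det| := by
      rw [hupd]
      by_cases hinj : Function.Injective (Function.update ι₀ i j)
      · exact hmax _ hinj
      · rw [Function.not_injective_iff] at hinj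
        obtain ⟨a, b, hab, hne⟩ := hinj
        have hcase : ∃ b', b' ≠ i ∧ ι₀ b' = j := by
          by_cases ha : a = i
          · have hbi : b ≠ i := fun h => hne (ha.trans h.symm)
            refine ⟨b, hbi, ?_⟩
            rw [ha, Function.update_self, Function.update_of_ne hbi] at hab
            exact hab.symm
          · by_cases hb : b = i
            · refine ⟨a, ha, ?_⟩
              rw [hb, Function.update_self, Function.update_of_ne ha] at hab
              exact hab
            · exfalso
              rw [Function.update_of_ne ha, Function.update_of_ne hb] at hab
              exact hne (hι₀inj hab)
        obtain ⟨b', hbi, hbj⟩ := hcase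
        have hz : (N (Function.update ι₀ i j)).det = 0 := by
          apply Matrix.det_zero_of_column_eq (Ne.symm hbi)
          intro k
          simp [hN, Function.update_self, Function.update_of_ne hbi, hbj]
        rw [hz, abs_zero]
        exact abs_nonneg _
    have : |cvec j i| = |((N ι₀).det)⁻¹| * |((N ι₀).updateCol i (fun p => v j p)).det| := by
      rw [hcvec]
      simp [Matrix.cramer_apply, abs_mul]
    rw [this]
    calc |((N ι₀).det)⁻¹| * |((N ι₀).updateCol i (fun p => v j p)).det|
        ≤ |((N ι₀).det)⁻¹| * |(N ι₀).det| := by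
          exact mul_le_mul_of_nonneg_left hdu (abs_nonneg _)
      _ = 1 := by rw [← abs_mul, inv_mul_cancel₀ hdet0, abs_one]
    -- each generator is a combination of the selected columns
  have hvcomb : ∀ j : Fin d ⊕ Fin d, v j = ∑ i, cvec j i • v (ι₀ i) := by
    intro j
    apply PiLp.ext
    intro p
    have h := congrFun (hmul j) p
    simp only [Matrix.mulVec, dotProduct] at h
    rw [euclid_sum_apply, ← h]
    apply Finset.sum_congr rfl
    intro i _
    rw [PiLp.smul_apply, smul_eq_mul, mul_comm]
    rfl
  set L : EuclideanSpace ℝ (Fin d) →ₗ[ℝ] EuclideanSpace ℝ (Fin d) :=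
    { toFun := fun u => ∑ i, u i • v (ι₀ i),
      map_add' := fun a b => by
        simp only [PiLp.add_apply, add_smul, Finset.sum_add_distrib]
      map_smul' := fun m a => by
        simp only [PiLp.smul_apply, smul_eq_mul, RingHom.id_apply, Finset.smul_sum,
          smul_smul] } with hL
  set Box : Set (EuclideanSpace ℝ (Fin d)) :=
    (MeasurableEquiv.toLp 2 (Fin d → ℝ)).symm ⁻¹'
      (Set.univ.pi fun _ => Set.Icc (-(2*(d:ℝ))) (2*(d:ℝ))) with hBox
  have habs : ∀ (w : EuclideanSpace ℝ (Fin d)) (p : Fin d), |w p| ≤ ‖w‖ := by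
    intro w p
    rw [EuclideanSpace.norm_eq]
    have h1 : |w p| = Real.sqrt (|w p|^2) := (Real.sqrt_sq (abs_nonneg _)).symm
    rw [h1]
    apply Real.sqrt_le_sqrt
    have := Finset.single_le_sum (f := fun i => ‖w i‖^2)
      (fun i _ => sq_nonneg _) (Finset.mem_univ p)
    simpa [Real.norm_eq_abs, sq_abs] using this
  have hsub : {z : EuclideanSpace ℝ (Fin d) |
      ∃ (t : Fin d → ℝ) (w : EuclideanSpace ℝ (Fin d)),
        (∀ i, |t i| ≤ 1) ∧ ‖w‖ ≤ 1 ∧ z = (∑ i, t i • x i) + w} ⊆ L '' Box := by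
    rintro z ⟨t, w, ht, hw, rfl⟩
    set s : Fin d ⊕ Fin d → ℝ := Sum.elim t (fun p => w p) with hs
    have hsb : ∀ j, |s j| ≤ 1 := by
      rintro (i | p)
      · exact ht i
      · exact le_trans (habs w p) hw
    have hz : (∑ i, t i • x i) + w = ∑ j : Fin d ⊕ Fin d, s j • v j := by
      rw [Fintype.sum_sum_type]
      congr 1
      apply PiLp.ext
      intro q
      rw [euclid_sum_apply]
      simp only [PiLp.smul_apply, smul_eq_mul, hv, Sum.elim_inr, hs,
        EuclideanSpace.single_apply, mul_ite, mul_one, mul_zero]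
      rw [Finset.sum_ite_eq (Finset.univ : Finset (Fin d)) q (fun p => w p)]
      simp
    set uf : Fin d → ℝ := fun i => ∑ j : Fin d ⊕ Fin d, s j * cvec j i with huf
    set u : EuclideanSpace ℝ (Fin d) := (WithLp.equiv 2 (Fin d → ℝ)).symm uf with hu
    have huapp : ∀ i, u i = uf i := fun i => rfl
    have humem : u ∈ Box := by
      simp only [hBox, Set.mem_preimage, Set.mem_pi, Set.mem_univ, forall_true_left,
        MeasurableEquiv.coe_toLp_symm, Set.mem_Icc, ← abs_le]
      intro i
      rw [huapp i, huf]
      calc |∑ j : Fin d ⊕ Fin d, s j * cvec j i|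
          ≤ ∑ j : Fin d ⊕ Fin d, |s j * cvec j i| := Finset.abs_sum_le_sum_abs _ _
        _ ≤ ∑ _j : Fin d ⊕ Fin d, (1:ℝ) := by
            apply Finset.sum_le_sum
            intro j _
            rw [abs_mul]
            exact mul_le_one₀ (hsb j) (abs_nonneg _) (hcbound j i)
        _ ≤ 2*d := by
            rw [Finset.sum_const, Finset.card_univ, Fintype.card_sum, Fintype.card_fin]
            simp [nsmul_eq_mul]
            ring_nf
            simp
    refine ⟨u, humem, ?_⟩
    rw [hz]
    show (∑ i, u i • v (ι₀ i)) = ∑ j : Fin d ⊕ Fin d, s j • v j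
    calc ∑ i, u i • v (ι₀ i)
        = ∑ i, (∑ j : Fin d ⊕ Fin d, s j * cvec j i) • v (ι₀ i) :=
          Finset.sum_congr rfl fun i _ => by rw [huapp i]
      _ = ∑ i, ∑ j : Fin d ⊕ Fin d, (s j * cvec j i) • v (ι₀ i) := by
          apply Finset.sum_congr rfl; intro i _; rw [Finset.sum_smul]
      _ = ∑ j : Fin d ⊕ Fin d, ∑ i, (s j * cvec j i) • v (ι₀ i) := Finset.sum_comm
      _ = ∑ j : Fin d ⊕ Fin d, s j • ∑ i, cvec j i • v (ι₀ i) := by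
          apply Finset.sum_congr rfl; intro j _
          rw [Finset.smul_sum]
          apply Finset.sum_congr rfl; intro i _
          rw [smul_smul]
      _ = ∑ j : Fin d ⊕ Fin d, s j • v j :=
          Finset.sum_congr rfl fun j _ => by rw [← hvcomb j]
  -- determinant of L
  have hLb : ∀ j, L ((PiLp.basisFun 2 ℝ (Fin d)) j) = v (ι₀ j) := by
    intro j
    show (∑ k, ((PiLp.basisFun 2 ℝ (Fin d)) j) k • v (ι₀ k)) = v (ι₀ j)
    have hbk : ∀ k, ((PiLp.basisFun 2 ℝ (Fin d)) j) k = if k = j then (1:ℝ) else 0 := by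
      intro k
      rw [PiLp.basisFun_apply, PiLp.single_apply]
    rw [Finset.sum_congr rfl (fun k _ => by rw [hbk k])]
    simp [ite_smul]
  have hdetL : LinearMap.det L = (N ι₀).det := by
    rw [← LinearMap.det_toMatrix (PiLp.basisFun 2 ℝ (Fin d))]
    congr 1
    ext i j
    rw [LinearMap.toMatrix_apply, hLb, PiLp.basisFun_repr]
    rfl
  have hvolBox : volume Box = (ENNReal.ofReal (4*(d:ℝ)))^d := by
    rw [hBox, (EuclideanSpace.volume_preserving_symm_measurableEquiv_toLp (Fin d)).measure_preimage
      ((MeasurableSet.univ_pi fun _ => measurableSet_Icc).nullMeasurableSet), volume_pi_pi]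
    simp only [Real.volume_Icc]
    rw [Finset.prod_const, Finset.card_univ, Fintype.card_fin]
    congr 1
    ring
  have hsumnn : (0:ℝ) ≤ ∑ k ∈ Finset.Icc 1 d, maxSubdet k X :=
    Finset.sum_nonneg fun k _ => maxSubdet_nonneg k X
  calc volume {z : EuclideanSpace ℝ (Fin d) |
      ∃ (t : Fin d → ℝ) (w : EuclideanSpace ℝ (Fin d)),
        (∀ i, |t i| ≤ 1) ∧ ‖w‖ ≤ 1 ∧ z = (∑ i, t i • x i) + w}
      ≤ volume (L '' Box) := measure_mono hsub
    _ = ENNReal.ofReal |LinearMap.det L| * volume Box :=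
        Measure.addHaar_image_linearMap volume L Box
    _ = ENNReal.ofReal (|(N ι₀).det| * (4*(d:ℝ))^d) := by
        rw [hdetL, hvolBox, ← ENNReal.ofReal_pow (by positivity),
          ← ENNReal.ofReal_mul (abs_nonneg _)]
    _ ≤ ENNReal.ofReal ((4*(d:ℝ)+1)^d * (1 + ∑ k ∈ Finset.Icc 1 d, maxSubdet k X)) := by
        apply ENNReal.ofReal_le_ofReal
        have hdb : |(N ι₀).det| ≤ 1 + ∑ k ∈ Finset.Icc 1 d, maxSubdet k X := by
          have hkey := key_det_bound d X d id Function.injective_id ι₀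
          have hNeq : N ι₀ = Matrix.of fun i j => Sum.elim (fun q => X (id i) q)
              (fun p => if id i = p then (1:ℝ) else 0) (ι₀ j) := by
            ext i j
            rcases hj : ι₀ j with q | p
            · simp [hN, hv, hj, hX]
            · simp [hN, hv, hj, EuclideanSpace.single_apply]
          rw [hNeq]
          exact hkey
        have h4 : (4*(d:ℝ))^d ≤ (4*(d:ℝ)+1)^d :=
          pow_le_pow_left₀ (by positivity) (by linarith) d
        calc |(N ι₀).det| * (4*(d:ℝ))^d
            ≤ (1 + ∑ k ∈ Finset.Icc 1 d, maxSubdet k X) * (4*(d:ℝ)+1)^d :=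
              mul_le_mul hdb h4 (by positivity) (by linarith)
          _ = (4*(d:ℝ)+1)^d * (1 + ∑ k ∈ Finset.Icc 1 d, maxSubdet k X) := mul_comm _ _
end

section
/- For all real A, all λ > 0 and all N ≥ 10: the integral over h ∈ [−1,1] of min(1/‖λh + A‖, N) dh is at most C·log N when λ ≥ 1, and at most C·(log N)/λ when 0 < λ ≤ 1, where ‖x‖ = dist(x, ℤ) and C is an absolute constant. -/
open MeasureTheory

/-- The distance from a real number to the nearest integer. -/
noncomputable def distInt (x : ℝ) : ℝ := min (Int.fract x) (1 - Int.fract x)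

lemma distInt_nonneg (x : ℝ) : 0 ≤ distInt x :=
  le_min (Int.fract_nonneg x) (by linarith [Int.fract_lt_one x])

lemma distInt_periodic : Function.Periodic distInt 1 := by
  intro x; unfold distInt; rw [Int.fract_add_one]

lemma measurable_distInt : Measurable distInt :=
  measurable_fract.min (measurable_const.sub measurable_fract)

lemma f_meas (N : ℝ) : Measurable (fun x => min (1 / distInt x) N) :=
  ((measurable_const.div measurable_distInt)).min measurable_const

lemma f_nonneg (N : ℝ) (hN : 0 ≤ N) (x : ℝ) : 0 ≤ min (1 / distInt x) N :=
  le_min (one_div_nonneg.2 (distInt_nonneg x)) hN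

lemma f_intInt (N : ℝ) (hN : 0 ≤ N) : ∀ t₁ t₂ : ℝ,
    IntervalIntegrable (fun x => min (1 / distInt x) N) volume t₁ t₂ := by
  intro t₁ t₂
  refine (intervalIntegrable_const (c := N)).mono_fun
    ((f_meas N).aestronglyMeasurable) ?_
  filter_upwards with x
  rw [Real.norm_eq_abs, Real.norm_eq_abs, abs_of_nonneg (f_nonneg N hN x), abs_of_nonneg hN]
  exact min_le_right _ _

lemma g_intInt (N : ℝ) (hN : 0 ≤ N) {a b : ℝ} (ha : 0 ≤ a) (hab : a ≤ b) :
    IntervalIntegrable (fun x => min (1 / x) N) volume a b := by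
  refine (intervalIntegrable_const (c := N)).mono_fun
    ((measurable_const.div measurable_id).min measurable_const).aestronglyMeasurable ?_
  rw [Filter.EventuallyLE, ae_restrict_iff' measurableSet_uIoc]
  filter_upwards with x hx
  rw [Set.uIoc_of_le hab] at hx
  have hx0 : 0 < x := lt_of_le_of_lt ha hx.1
  rw [Real.norm_eq_abs, Real.norm_eq_abs,
    abs_of_nonneg (le_min (one_div_nonneg.2 hx0.le) hN), abs_of_nonneg hN]
  exact min_le_right _ _

lemma g_int_le (N : ℝ) (hN : 10 ≤ N) :
    ∫ x in (0:ℝ)..1, min (1 / x) N ≤ 1 + Real.log N := by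
  have hN0 : (0:ℝ) < N := by linarith
  have hc0 : (0:ℝ) < 1 / N := by positivity
  have hc1 : (1:ℝ) / N ≤ 1 := by rw [div_le_one hN0]; linarith
  have h1 : IntervalIntegrable (fun x => min (1 / x) N) volume 0 (1/N) :=
    g_intInt N hN0.le le_rfl hc0.le
  have h2 : IntervalIntegrable (fun x => min (1 / x) N) volume (1/N) 1 :=
    g_intInt N hN0.le hc0.le hc1
  rw [← intervalIntegral.integral_add_adjacent_intervals h1 h2]
  have e1 : ∫ x in (0:ℝ)..(1/N), min (1 / x) N ≤ 1 := by
    calc ∫ x in (0:ℝ)..(1/N), min (1 / x) N ≤ ∫ _ in (0:ℝ)..(1/N), N :=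
          intervalIntegral.integral_mono_on hc0.le h1 intervalIntegrable_const
            (fun x _ => min_le_right _ _)
      _ = 1 := by rw [intervalIntegral.integral_const, smul_eq_mul]; field_simp; ring
  have hone : IntervalIntegrable (fun x : ℝ => 1 / x) volume (1/N) 1 := by
    apply intervalIntegral.intervalIntegrable_one_div
    · intro x hx
      rw [Set.uIcc_of_le hc1] at hx
      exact (lt_of_lt_of_le hc0 hx.1).ne'
    · exact continuousOn_id
  have e2 : ∫ x in (1/N:ℝ)..1, min (1 / x) N ≤ Real.log N := by
    calc ∫ x in (1/N:ℝ)..1, min (1 / x) N ≤ ∫ x in (1/N:ℝ)..1, 1 / x :=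
          intervalIntegral.integral_mono_on hc1 h2 hone (fun x _ => min_le_left _ _)
      _ = Real.log N := by
          rw [integral_one_div, one_div_one_div]
          rw [Set.uIcc_of_le hc1]
          exact fun h => absurd h.1 (by simpa using hc0)
  linarith

lemma base_int (N : ℝ) (hN : 10 ≤ N) :
    ∫ x in (0:ℝ)..1, min (1 / distInt x) N ≤ 2 + 2 * Real.log N := by
  have hN0 : (0:ℝ) ≤ N := by linarith
  have hg'i : IntervalIntegrable (fun x => min (1 / (1 - x)) N) volume 0 1 := by
    have := ((g_intInt N hN0 (a := 0) (b := 1) le_rfl zero_le_one).comp_sub_left 1).symm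
    simpa using this
  have hsum : IntervalIntegrable
      (fun x => min (1 / x) N + min (1 / (1 - x)) N) volume 0 1 :=
    (g_intInt N hN0 le_rfl zero_le_one).add hg'i
  have hpt : ∀ x ∈ Set.Icc (0:ℝ) 1,
      min (1 / distInt x) N ≤ min (1 / x) N + min (1 / (1 - x)) N := by
    intro x hx
    have hx1 : 0 ≤ 1 - x := by linarith [hx.2]
    have hn1 : 0 ≤ min (1 / x) N := le_min (one_div_nonneg.2 hx.1) hN0
    have hn2 : 0 ≤ min (1 / (1 - x)) N := le_min (one_div_nonneg.2 hx1) hN0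
    rcases eq_or_lt_of_le hx.1 with h0 | h0
    · have : distInt x = 0 := by simp [distInt, ← h0]
      rw [this, div_zero, min_eq_left hN0]; linarith
    rcases eq_or_lt_of_le hx.2 with h1 | h1
    · have : distInt x = 0 := by simp [distInt, h1]
      rw [this, div_zero, min_eq_left hN0]; linarith
    have hfr : Int.fract x = x := Int.fract_eq_self.2 ⟨hx.1, h1⟩
    have : distInt x = min x (1 - x) := by rw [distInt, hfr]
    rw [this]
    rcases min_cases x (1 - x) with ⟨h, _⟩ | ⟨h, _⟩ <;> rw [h] <;> linarith
  calc ∫ x in (0:ℝ)..1, min (1 / distInt x) N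
      ≤ ∫ x in (0:ℝ)..1, (min (1 / x) N + min (1 / (1 - x)) N) :=
        intervalIntegral.integral_mono_on zero_le_one (f_intInt N hN0 0 1) hsum hpt
    _ = (∫ x in (0:ℝ)..1, min (1 / x) N) + ∫ x in (0:ℝ)..1, min (1 / (1 - x)) N :=
        intervalIntegral.integral_add (g_intInt N hN0 le_rfl zero_le_one) hg'i
    _ ≤ 2 + 2 * Real.log N := by
        have := intervalIntegral.integral_comp_sub_left (a := (0:ℝ)) (b := 1)
          (fun x => min (1 / x) N) 1
        simp only [sub_zero, sub_self] at this
        rw [this]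
        linarith [g_int_le N hN]

/-- averaging bound for `∫_{-1}^1 min(1/‖λh + A‖, N) dh`. -/
theorem stmt7 :
    ∃ C : ℝ, 0 < C ∧
      ∀ (A lam N : ℝ), 0 < lam → 10 ≤ N →
        ((1 ≤ lam →
            ∫ h in Set.Icc (-1 : ℝ) 1, min (1 / distInt (lam * h + A)) N ≤ C * Real.log N) ∧
         (lam ≤ 1 →
            ∫ h in Set.Icc (-1 : ℝ) 1, min (1 / distInt (lam * h + A)) N ≤
              C * Real.log N / lam)) := by
  refine ⟨9, by norm_num, fun A lam N hlam hN => ?_⟩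
  have hN0 : (0:ℝ) < N := by linarith
  have hlog : 2 ≤ Real.log N := by
    rw [Real.le_log_iff_exp_le hN0]
    have h := Real.exp_one_lt_d9
    have h2 : Real.exp 2 = Real.exp 1 * Real.exp 1 := by
      rw [← Real.exp_add]; norm_num
    nlinarith [Real.exp_pos 1]
  set f : ℝ → ℝ := fun x => min (1 / distInt x) N with hf
  have hper : Function.Periodic f 1 := fun x => by
    simp only [hf]; rw [distInt_periodic x]
  have hii := f_intInt N hN0.le
  set n : ℤ := ⌈2 * lam⌉ with hn
  have hn1 : 2 * lam ≤ (n : ℝ) := Int.le_ceil _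
  have hn2 : (n : ℝ) ≤ 2 * lam + 1 := by
    have := Int.ceil_lt_add_one (2 * lam); linarith
  have hn0 : (0:ℝ) ≤ (n : ℝ) := by linarith
  have hI0 : 0 ≤ ∫ x in (0:ℝ)..1, f x :=
    intervalIntegral.integral_nonneg zero_le_one (fun x _ => f_nonneg N hN0.le x)
  have key : ∫ h in Set.Icc (-1 : ℝ) 1, f (lam * h + A)
      ≤ lam⁻¹ * ((2 * lam + 1) * (2 + 2 * Real.log N)) := by
    have e0 : ∫ h in Set.Icc (-1:ℝ) 1, f (lam * h + A)
        = ∫ h in (-1:ℝ)..1, f (lam * h + A) := by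
      rw [MeasureTheory.integral_Icc_eq_integral_Ioc,
        intervalIntegral.integral_of_le (by norm_num : (-1:ℝ) ≤ 1)]
    have e1 : ∫ h in (-1:ℝ)..1, f (lam * h + A)
        = lam⁻¹ • ∫ x in (lam * (-1) + A)..(lam * 1 + A), f x :=
      intervalIntegral.integral_comp_mul_add f hlam.ne' A
    have e2 : ∫ x in (lam * (-1) + A)..(lam * 1 + A), f x
        ≤ ∫ x in (lam * (-1) + A)..(lam * (-1) + A + n • (1:ℝ)), f x := by
      refine intervalIntegral.integral_mono_interval le_rfl (by linarith) ?_
        (Filter.Eventually.of_forall (fun x => f_nonneg N hN0.le x)) (hii _ _)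
      rw [zsmul_eq_mul, mul_one]
      linarith
    have e3 : ∫ x in (lam * (-1) + A)..(lam * (-1) + A + n • (1:ℝ)), f x
        = n • ∫ x in (lam * (-1) + A)..(lam * (-1) + A + 1), f x :=
      hper.intervalIntegral_add_zsmul_eq n _ hii
    have e4 : ∫ x in (lam * (-1) + A)..(lam * (-1) + A + 1), f x
        = ∫ x in (0:ℝ)..(0 + 1), f x := hper.intervalIntegral_add_eq _ 0
    have e5 : ∫ x in (0:ℝ)..(0+1), f x ≤ 2 + 2 * Real.log N := by
      rw [zero_add]; exact base_int N hN
    have hJ : ∫ x in (lam * (-1) + A)..(lam * 1 + A), f x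
        ≤ (2 * lam + 1) * (2 + 2 * Real.log N) := by
      calc ∫ x in (lam * (-1) + A)..(lam * 1 + A), f x
          ≤ n • ∫ x in (lam * (-1) + A)..(lam * (-1) + A + 1), f x := e3 ▸ e2
        _ = (n : ℝ) * ∫ x in (0:ℝ)..(0+1), f x := by rw [e4, zsmul_eq_mul]
        _ ≤ (2 * lam + 1) * (2 + 2 * Real.log N) := by
            apply mul_le_mul hn2 e5 (by rw [zero_add]; exact hI0) (by linarith)
    rw [e0, e1, smul_eq_mul]
    exact mul_le_mul_of_nonneg_left hJ (by positivity)
  constructor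
  · intro h1
    have h3 : lam⁻¹ * (2 * lam + 1) ≤ 3 := by
      rw [inv_mul_le_iff₀ hlam]; linarith
    have : lam⁻¹ * ((2 * lam + 1) * (2 + 2 * Real.log N))
        ≤ 3 * (2 + 2 * Real.log N) := by
      rw [← mul_assoc]
      exact mul_le_mul_of_nonneg_right h3 (by linarith)
    calc ∫ h in Set.Icc (-1 : ℝ) 1, min (1 / distInt (lam * h + A)) N
        ≤ lam⁻¹ * ((2 * lam + 1) * (2 + 2 * Real.log N)) := key
      _ ≤ 3 * (2 + 2 * Real.log N) := this
      _ ≤ 9 * Real.log N := by linarith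
  · intro h1
    have h3 : (2 * lam + 1) * (2 + 2 * Real.log N) ≤ 9 * Real.log N := by
      nlinarith
    calc ∫ h in Set.Icc (-1 : ℝ) 1, min (1 / distInt (lam * h + A)) N
        ≤ lam⁻¹ * ((2 * lam + 1) * (2 + 2 * Real.log N)) := key
      _ ≤ lam⁻¹ * (9 * Real.log N) := by
          exact mul_le_mul_of_nonneg_left h3 (by positivity)
      _ = 9 * Real.log N / lam := by
          rw [div_eq_inv_mul]
end

section
/- For every ε > 0 there is a constant C_ε such that for all Y ≥ 2, the number of nonzero d×d integer matrices (y_{ij}) expressible as y_{ij} = x^{(1)}_i x^{(1)}_j − x^{(2)}_i x^{(2)}_j for some x^{(1)}, x^{(2)} ∈ ℤ^d, with max_{i,j} |y_{ij}| ≤ Y, is at most C_ε Y^{d+ε}. -/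
/-!
Put `u = x⁽¹⁾ - x⁽²⁾` and `v = x⁽¹⁾ + x⁽²⁾`, so that `2 y = u vᵀ + v uᵀ`: the matrix `y` is
determined by the pairs `(uₖ, vₖ)`. Since `yₖₖ = uₖ vₖ`, and `y ≠ 0` forces some `uⱼ` and some
`vⱼ` to be nonzero, every pair lies in the hyperbolic box `|u|, |v| ≤ 2Y`, `|u v| ≤ Y`. By the
harmonic sum this box has `O(Y log Y)` lattice points, so there are at most `O(Y log Y)^d`
matrices, and `log Y ≤ Y^δ / δ`.
-/

open Finset

def natHyperbolicBox (n : ℕ) : Finset (ℕ × ℕ) :=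
  {p ∈ range (2 * n + 1) ×ˢ range (2 * n + 1) | p.1 * p.2 ≤ n}

noncomputable def hyperbolicBox (n : ℕ) : Finset (ℤ × ℤ) :=
  {p ∈ Icc (-(2 * n : ℤ)) (2 * n) ×ˢ Icc (-(2 * n : ℤ)) (2 * n) | (p.1 * p.2).natAbs ≤ n}

lemma sum_div_le_mul_harmonic (n : ℕ) :
    ((∑ a ∈ Icc 1 n, n / a : ℕ) : ℝ) ≤ n * harmonic n := by
  rw [harmonic_eq_sum_Icc, Rat.cast_sum, mul_sum, Nat.cast_sum]
  refine sum_le_sum fun a _ => ?_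
  rw [Rat.cast_inv, Rat.cast_natCast, ← div_eq_mul_inv]
  exact Nat.cast_div_le

lemma card_natHyperbolicBox_le (n : ℕ) :
    #(natHyperbolicBox n) ≤ 2 * (2 * n + 1) + ∑ a ∈ Icc 1 n, n / a := by
  have hcover : natHyperbolicBox n ⊆ (range (2 * n + 1) ×ˢ {0} ∪ {0} ×ˢ range (2 * n + 1)) ∪
      (Icc 1 n).biUnion fun a => {a} ×ˢ Icc 1 (n / a) := by
    rintro ⟨a, b⟩ hab
    simp only [natHyperbolicBox, mem_filter, mem_product, mem_range] at hab
    obtain ⟨⟨ha, hb⟩, habn⟩ := hab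
    simp only [mem_union, mem_product, mem_range, mem_singleton, mem_biUnion, mem_Icc]
    rcases Nat.eq_zero_or_pos b with rfl | hb0
    · tauto
    rcases Nat.eq_zero_or_pos a with rfl | ha0
    · tauto
    refine Or.inr ⟨a, ⟨ha0, le_trans (Nat.le_mul_of_pos_right a hb0) habn⟩, rfl, hb0, ?_⟩
    exact (Nat.le_div_iff_mul_le ha0).2 (by rwa [mul_comm])
  calc #(natHyperbolicBox n)
      ≤ #(range (2 * n + 1) ×ˢ {0} ∪ {0} ×ˢ range (2 * n + 1)) +
          #((Icc 1 n).biUnion fun a => {a} ×ˢ Icc 1 (n / a)) :=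
        (card_le_card hcover).trans (card_union_le _ _)
    _ ≤ 2 * (2 * n + 1) + ∑ a ∈ Icc 1 n, #({a} ×ˢ Icc 1 (n / a)) := by
        gcongr
        · refine (card_union_le _ _).trans ?_
          simp only [product_singleton, singleton_product, card_map, card_range]
          omega
        · exact card_biUnion_le
    _ = 2 * (2 * n + 1) + ∑ a ∈ Icc 1 n, n / a := by simp

lemma card_hyperbolicBox_le_four_mul (n : ℕ) :
    #(hyperbolicBox n) ≤ 4 * #(natHyperbolicBox n) := by
  refine card_le_mul_card_image_of_maps_to (f := fun p => (p.1.natAbs, p.2.natAbs)) ?_ 4 ?_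
  · rintro ⟨u, v⟩ huv
    simp only [hyperbolicBox, mem_filter, mem_product, mem_Icc] at huv
    simp only [natHyperbolicBox, mem_filter, mem_product, mem_range, ← Int.natAbs_mul]
    omega
  · rintro ⟨a, b⟩ -
    have hfiber : {p ∈ hyperbolicBox n | (p.1.natAbs, p.2.natAbs) = (a, b)} ⊆
        ({(a : ℤ), -(a : ℤ)} ×ˢ {(b : ℤ), -(b : ℤ)}) := by
      rintro ⟨u, v⟩ huv
      simp only [mem_filter, Prod.mk.injEq] at huv
      simp only [mem_product, mem_insert, mem_singleton]
      omega
    exact (card_le_card hfiber).trans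
      (by rw [card_product]; exact Nat.mul_le_mul card_le_two card_le_two)

lemma card_hyperbolicBox_le_log (n : ℕ) :
    (#(hyperbolicBox n) : ℝ) ≤ 4 * (4 * n + 2 + n * (1 + Real.log n)) := by
  calc (#(hyperbolicBox n) : ℝ) ≤ 4 * #(natHyperbolicBox n) := by
        exact_mod_cast card_hyperbolicBox_le_four_mul n
    _ ≤ 4 * (2 * (2 * n + 1) + ((∑ a ∈ Icc 1 n, n / a : ℕ) : ℝ)) := by
        gcongr
        exact_mod_cast card_natHyperbolicBox_le n
    _ ≤ 4 * (4 * n + 2 + n * (1 + Real.log n)) := by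
        have := (sum_div_le_mul_harmonic n).trans
          (mul_le_mul_of_nonneg_left (harmonic_le_one_add_log n) n.cast_nonneg)
        linarith

section
variable {ι : Type*} {y : Matrix ι ι ℤ} {u v : ι → ℤ} {n : ℕ}

variable (ι) in
def boundedOuterDiffs (n : ℕ) : Set (Matrix ι ι ℤ) :=
  {y | y ≠ 0 ∧ (∃ x1 x2 : ι → ℤ, ∀ i j, y i j = x1 i * x1 j - x2 i * x2 j) ∧
    ∀ i j, (y i j).natAbs ≤ n}

lemma exists_ne_zero_of_two_mul_eq (h : ∀ i j, 2 * y i j = u i * v j + v i * u j)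
    (hy : y ≠ 0) : ∃ j, v j ≠ 0 := by
  by_contra! hv
  exact hy (Matrix.ext fun i j => by simpa [hv] using h i j)

lemma natAbs_le_of_two_mul_eq (h : ∀ i j, 2 * y i j = u i * v j + v i * u j)
    (hy : ∀ i j, (y i j).natAbs ≤ n) (hv : ∃ j, v j ≠ 0) (k : ι) : (u k).natAbs ≤ 2 * n := by
  obtain ⟨j, hj, hkj⟩ : ∃ j, v j ≠ 0 ∧ (u k * v j).natAbs ≤ 2 * n := by
    by_cases hk : v k = 0
    · obtain ⟨j, hj⟩ := hv
      refine ⟨j, hj, ?_⟩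
      have := hy k j
      have hkj := h k j
      rw [hk, zero_mul, add_zero] at hkj
      omega
    · refine ⟨k, hk, ?_⟩
      have hkk : u k * v k = y k k := by linarith [h k k]
      rw [hkk]
      exact (hy k k).trans (by omega)
  rw [Int.natAbs_mul] at hkj
  exact le_trans (Nat.le_mul_of_pos_right _ (Int.natAbs_pos.2 hj)) hkj

lemma mem_hyperbolicBox_of_two_mul_eq (h : ∀ i j, 2 * y i j = u i * v j + v i * u j)
    (hy : ∀ i j, (y i j).natAbs ≤ n) (hy0 : y ≠ 0) (k : ι) : (u k, v k) ∈ hyperbolicBox n := by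
  have h' : ∀ i j, 2 * y i j = v i * u j + u i * v j :=
    fun i j => (h i j).trans (add_comm _ _)
  have hu := natAbs_le_of_two_mul_eq h hy (exists_ne_zero_of_two_mul_eq h hy0) k
  have hv := natAbs_le_of_two_mul_eq h' hy (exists_ne_zero_of_two_mul_eq h' hy0) k
  have hkk : u k * v k = y k k := by linarith [h k k]
  simp only [hyperbolicBox, mem_filter, mem_product, mem_Icc, hkk, hy k k, and_true]
  omega

/-- The division is exact on the matrices counted: with `w k = (x₁ k - x₂ k, x₁ k + x₂ k)` the
numerator is `2 (x₁ i x₁ j - x₂ i x₂ j)`. -/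
def symmOuter (w : ι → ℤ × ℤ) : Matrix ι ι ℤ :=
  Matrix.of fun i j => ((w i).1 * (w j).2 + (w i).2 * (w j).1) / 2

variable [Fintype ι] [DecidableEq ι]

lemma boundedOuterDiffs_subset_image_symmOuter (n : ℕ) :
    boundedOuterDiffs ι n ⊆ ↑((Fintype.piFinset fun _ : ι => hyperbolicBox n).image symmOuter) := by
  rintro y ⟨hy0, ⟨x1, x2, hx⟩, hy⟩
  set w : ι → ℤ × ℤ := fun k => (x1 k - x2 k, x1 k + x2 k)
  have hw : ∀ i j, 2 * y i j = (w i).1 * (w j).2 + (w i).2 * (w j).1 := fun i j => by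
    simp only [w, hx]; ring
  refine mem_image.2
    ⟨w, Fintype.mem_piFinset.2 (mem_hyperbolicBox_of_two_mul_eq hw hy hy0), ?_⟩
  ext i j
  rw [symmOuter, Matrix.of_apply, ← hw, Int.mul_ediv_cancel_left _ two_ne_zero]

lemma ncard_boundedOuterDiffs_le (n : ℕ) :
    (boundedOuterDiffs ι n).ncard ≤ #(hyperbolicBox n) ^ Fintype.card ι :=
  calc _ ≤ #((Fintype.piFinset fun _ : ι => hyperbolicBox n).image symmOuter) := by
        rw [← Set.ncard_coe_finset]
        exact Set.ncard_le_ncard (boundedOuterDiffs_subset_image_symmOuter n) (finite_toSet _)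
    _ ≤ #(Fintype.piFinset fun _ : ι => hyperbolicBox n) := card_image_le
    _ = #(hyperbolicBox n) ^ Fintype.card ι := by simp

end

lemma card_hyperbolicBox_floor_le {δ : ℝ} (hδ : 0 < δ) {Y : ℝ} (hY : 1 ≤ Y) :
    (#(hyperbolicBox ⌊Y⌋₊) : ℝ) ≤ (28 + 4 / δ) * Y ^ (1 + δ) := by
  set n := ⌊Y⌋₊
  have hn1 : (1 : ℝ) ≤ n := by exact_mod_cast Nat.le_floor (by simpa using hY)
  have hnY : (n : ℝ) ≤ Y := Nat.floor_le (by linarith)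
  have hlog : Real.log n ≤ Y ^ δ / δ :=
    (Real.log_le_log (by linarith) hnY).trans (Real.log_le_rpow_div (by linarith) hδ)
  have hYδ : 1 ≤ Y ^ δ := Real.one_le_rpow hY hδ.le
  calc (#(hyperbolicBox n) : ℝ) ≤ 4 * (4 * n + 2 + n * (1 + Real.log n)) :=
        card_hyperbolicBox_le_log n
    _ ≤ 28 * n + 4 * n * Real.log n := by linarith
    _ ≤ 28 * (Y * Y ^ δ) + 4 * Y * (Y ^ δ / δ) := by
        have := Real.log_natCast_nonneg n
        gcongr
        nlinarith
    _ = (28 + 4 / δ) * Y ^ (1 + δ) := by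
        rw [Real.rpow_add (by linarith), Real.rpow_one]; ring

theorem stmt12_general (d : ℕ) :
    ∀ ε : ℝ, 0 < ε → ∃ C : ℝ, 0 < C ∧
      ∀ Y : ℝ, 2 ≤ Y →
        (Set.ncard {y : Matrix (Fin d) (Fin d) ℤ |
            y ≠ 0 ∧
            (∃ x1 x2 : Fin d → ℤ, ∀ i j, y i j = x1 i * x1 j - x2 i * x2 j) ∧
            (∀ i j, ((|y i j| : ℤ) : ℝ) ≤ Y)} : ℝ) ≤
          C * Y ^ ((d : ℝ) + ε) := by
  intro ε hε
  set δ := ε / (d + 1)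
  have hδ : 0 < δ := by positivity
  refine ⟨(28 + 4 / δ) ^ d, by positivity, fun Y hY => ?_⟩
  have habs_le_iff : ∀ z : ℤ, ((|z| : ℤ) : ℝ) ≤ Y ↔ z.natAbs ≤ ⌊Y⌋₊ := fun z => by
    rw [Nat.le_floor_iff (by linarith), Nat.cast_natAbs]
  simp only [habs_le_iff]
  change ((boundedOuterDiffs (Fin d) ⌊Y⌋₊).ncard : ℝ) ≤ _
  have hexp : (1 + δ) * d ≤ d + ε := by
    have : δ * d ≤ ε := by
      rw [div_mul_eq_mul_div, div_le_iff₀ (by positivity)]; nlinarith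
    linarith
  calc _ ≤ ((#(hyperbolicBox ⌊Y⌋₊) ^ d : ℕ) : ℝ) := by
        exact_mod_cast (ncard_boundedOuterDiffs_le ⌊Y⌋₊).trans_eq (by rw [Fintype.card_fin])
    _ ≤ ((28 + 4 / δ) * Y ^ (1 + δ)) ^ d := by
        push_cast
        gcongr
        exact card_hyperbolicBox_floor_le hδ (by linarith)
    _ = (28 + 4 / δ) ^ d * Y ^ ((1 + δ) * d) := by
        rw [mul_pow, Real.rpow_mul_natCast (by linarith)]
    _ ≤ (28 + 4 / δ) ^ d * Y ^ ((d : ℝ) + ε) := by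
        gcongr
        linarith

/-- the number of nonzero `d × d` integer matrices of the form
`y_{ij} = x⁽¹⁾ᵢ x⁽¹⁾ⱼ − x⁽²⁾ᵢ x⁽²⁾ⱼ` with all entries bounded by `Y` is `O_ε(Y^{d+ε})`. -/
theorem stmt12 (d : ℕ) (hd : 1 ≤ d) :
    ∀ ε : ℝ, 0 < ε → ∃ C : ℝ, 0 < C ∧
      ∀ Y : ℝ, 2 ≤ Y →
        (Set.ncard {y : Matrix (Fin d) (Fin d) ℤ |
            y ≠ 0 ∧
            (∃ x1 x2 : Fin d → ℤ, ∀ i j, y i j = x1 i * x1 j - x2 i * x2 j) ∧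
            (∀ i j, ((|y i j| : ℤ) : ℝ) ≤ Y)} : ℝ) ≤
          C * Y ^ ((d : ℝ) + ε) :=
  stmt12_general d
end
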